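/- arXiv:2110.00743 — 7 statements merged into one kernel-verified Lean document; each statement's English description precedes it below -/
import Mathlib

section
/- For all p, ε > 0 and all k, l ∈ ℝ there exists a constant C > 0 such that ∫_ℂ (β(z,w) + 1)^l ρ(w)^k e^{−p(|z−w|/ρ(z))^ε} dA(w) ≤ C ρ(z)^{k+2} for every z ∈ ℂ. -/
/-!
Put `t = |z - w| / ρ(z)`. The metric bounds give `β(z,w) + 1 ≲ (1 + t)²`, and the growth
condition on `ρ`, applied on the disk of radius `(2 + t) ρ(z)`, gives `ρ(w)/ρ(z)` and its inverse
`≲ (1 + t)^θ`. So the integrand is `≲ ρ(z)^k (1 + t)^a e^{-p t^ε}` for a fixed power `a`, and as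
the stretched exponential beats every power, `≲ ρ(z)^k (1 + t)^{-3}`. The substitution
`w = z + ρ(z) u` turns the integral of `(1 + t)^{-3}` into `ρ(z)²` times the finite integral of
`(1 + |u|)^{-3}` over `ℂ`.
-/

open MeasureTheory Metric Real Module
open scoped ENNReal Nat

lemma rpow_le_rpow_abs_of_inv_le_of_le {x M : ℝ} (hx : 0 < x) (hM₁ : M⁻¹ ≤ x) (hM₂ : x ≤ M)
    (k : ℝ) : x ^ k ≤ M ^ |k| := by
  have hM : 0 < M := hx.trans_le hM₂
  rcases le_total 0 k with hk | hk
  · rw [abs_of_nonneg hk]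
    exact rpow_le_rpow hx.le hM₂ hk
  · calc x ^ k ≤ M⁻¹ ^ k := rpow_le_rpow_of_nonpos (inv_pos.2 hM) hM₁ hk
      _ = M ^ |k| := by rw [abs_of_nonpos hk, inv_rpow hM.le, ← rpow_neg hM.le]

lemma rpow_le_one_add_rpow_two {t a : ℝ} (ht : 0 ≤ t) (ha₀ : 0 ≤ a) (ha₂ : a ≤ 2) :
    t ^ a ≤ (1 + t) ^ (2 : ℝ) :=
  calc t ^ a ≤ (1 + t) ^ a := rpow_le_rpow ht (by linarith) ha₀
    _ ≤ (1 + t) ^ (2 : ℝ) := rpow_le_rpow_of_exponent_le (by linarith) ha₂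

lemma one_add_rpow_le_two_rpow_mul {t c : ℝ} (ht : 0 ≤ t) (hc : 0 ≤ c) :
    (1 + t) ^ c ≤ 2 ^ c * (1 + t ^ c) := by
  rcases le_total t 1 with h | h
  · calc (1 + t) ^ c ≤ 2 ^ c := rpow_le_rpow (by positivity) (by linarith) hc
      _ ≤ 2 ^ c * (1 + t ^ c) :=
        le_mul_of_one_le_right (by positivity) (by linarith [rpow_nonneg ht c])
  · calc (1 + t) ^ c ≤ (2 * t) ^ c := rpow_le_rpow (by positivity) (by linarith) hc
      _ = 2 ^ c * t ^ c := mul_rpow zero_le_two ht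
      _ ≤ 2 ^ c * (1 + t ^ c) := by gcongr; linarith

lemma pow_mul_exp_neg_mul_le {s p : ℝ} (hs : 0 ≤ s) (hp : 0 < p) (N : ℕ) :
    s ^ N * exp (-(p * s)) ≤ N ! / p ^ N := by
  have h := pow_div_factorial_le_exp (x := p * s) (by positivity) N
  rw [div_le_iff₀ (by positivity), mul_pow] at h
  rw [exp_neg, ← div_eq_mul_inv, div_le_div_iff₀ (exp_pos _) (by positivity)]
  linarith

theorem exists_exp_neg_mul_rpow_le_mul_one_add_rpow_neg {p ε : ℝ} (hp : 0 < p) (hε : 0 < ε)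
    (b : ℝ) : ∃ C, 0 < C ∧ ∀ t : ℝ, 0 ≤ t → exp (-(p * t ^ ε)) ≤ C * (1 + t) ^ (-b) := by
  obtain ⟨N, hN⟩ := exists_nat_ge (b / ε)
  have hbN : b ≤ ε * N := by rwa [div_le_iff₀' hε] at hN
  refine ⟨2 ^ (ε * N) * (1 + N ! / p ^ N), by positivity, fun t ht => ?_⟩
  have hs : 0 ≤ t ^ ε := rpow_nonneg ht ε
  have hexp : exp (-(p * t ^ ε)) ≤ 1 := exp_le_one_iff.2 (neg_nonpos.2 (by positivity))
  rw [rpow_neg (by linarith), ← div_eq_mul_inv, le_div_iff₀ (by positivity), mul_comm]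
  calc (1 + t) ^ b * exp (-(p * t ^ ε)) ≤ (1 + t) ^ (ε * N) * exp (-(p * t ^ ε)) := by
        gcongr
        linarith
    _ ≤ 2 ^ (ε * N) * (1 + (t ^ ε) ^ N) * exp (-(p * t ^ ε)) := by
        rw [← rpow_natCast, ← rpow_mul ht]
        gcongr
        exact one_add_rpow_le_two_rpow_mul ht (by positivity)
    _ = 2 ^ (ε * N) * (exp (-(p * t ^ ε)) + (t ^ ε) ^ N * exp (-(p * t ^ ε))) := by ring
    _ ≤ 2 ^ (ε * N) * (1 + N ! / p ^ N) := by
        gcongr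
        exact pow_mul_exp_neg_mul_le hs hp N

theorem lintegral_comp_norm_sub_div {E : Type*} [NormedAddCommGroup E] [NormedSpace ℝ E]
    [MeasurableSpace E] [BorelSpace E] [FiniteDimensional ℝ E] (μ : Measure E)
    [μ.IsAddHaarMeasure] (g : ℝ → ℝ≥0∞) (z : E) {r : ℝ} (hr : 0 < r) :
    ∫⁻ x, g (‖z - x‖ / r) ∂μ = ENNReal.ofReal (r ^ finrank ℝ E) * ∫⁻ x, g ‖x‖ ∂μ := by
  have hnorm : ∀ x, ‖z - x‖ / r = ‖r⁻¹ • (x - z)‖ := fun x => by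
    rw [norm_smul, norm_inv, norm_of_nonneg hr.le, norm_sub_rev, inv_mul_eq_div]
  simp_rw [hnorm]
  rw [lintegral_sub_right_eq_self (fun x => g ‖r⁻¹ • x‖) z]
  let e := (Homeomorph.smulOfNeZero (α := E) r⁻¹ (inv_ne_zero hr.ne')).toMeasurableEquiv
  have he : (e : E → E) = (r⁻¹ • ·) := rfl
  rw [show ∫⁻ x, g ‖r⁻¹ • x‖ ∂μ = ∫⁻ x, g ‖x‖ ∂(Measure.map e μ) from
      (lintegral_map_equiv (fun x => g ‖x‖) e).symm,
    he, Measure.map_addHaar_smul μ (inv_ne_zero hr.ne'), lintegral_smul_measure, inv_pow,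
    inv_inv, abs_of_pos (by positivity), smul_eq_mul]

theorem lintegral_le_of_le_mul_one_add_norm_sub_div_rpow {E : Type*} [NormedAddCommGroup E]
    [NormedSpace ℝ E] [MeasurableSpace E] [BorelSpace E] [FiniteDimensional ℝ E] (μ : Measure E)
    [μ.IsAddHaarMeasure] {f : E → ℝ} {c r s : ℝ} (hc : 0 ≤ c) (hr : 0 < r) (z : E)
    (hf : ∀ x, f x ≤ c * (1 + ‖z - x‖ / r) ^ (-s)) :
    ∫⁻ x, ENNReal.ofReal (f x) ∂μ ≤
      ENNReal.ofReal (c * r ^ finrank ℝ E) * ∫⁻ x, ENNReal.ofReal ((1 + ‖x‖) ^ (-s)) ∂μ :=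
  calc ∫⁻ x, ENNReal.ofReal (f x) ∂μ
      ≤ ∫⁻ x, ENNReal.ofReal c * ENNReal.ofReal ((1 + ‖z - x‖ / r) ^ (-s)) ∂μ :=
        lintegral_mono fun x => by
          rw [← ENNReal.ofReal_mul hc]
          exact ENNReal.ofReal_le_ofReal (hf x)
    _ = _ := by
        rw [lintegral_const_mul' _ _ ENNReal.ofReal_ne_top,
          lintegral_comp_norm_sub_div μ (fun t => ENNReal.ofReal ((1 + t) ^ (-s))) z hr,
          ENNReal.ofReal_mul hc, mul_assoc]

lemma add_one_rpow_mul_rpow_le {b x t C₀ C₁ θ : ℝ} (hb : 0 ≤ b) (ht : 0 ≤ t) (hC₀ : 0 < C₀)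
    (hC₁ : 0 ≤ C₁) (hθ : 0 ≤ θ) (hbt : b ≤ C₁ * (1 + t) ^ (2 : ℝ)) (hx : 0 < x)
    (hx₁ : (C₀ * (2 + t) ^ θ)⁻¹ ≤ x) (hx₂ : x ≤ C₀ * (2 + t) ^ θ) (k l : ℝ) :
    (b + 1) ^ l * x ^ k ≤
      (C₁ + 1) ^ |l| * (2 ^ θ * C₀) ^ |k| * (1 + t) ^ (2 * |l| + θ * |k|) := by
  have hsq : 1 ≤ (1 + t) ^ (2 : ℝ) := one_le_rpow (by linarith) zero_le_two
  have hbl : (b + 1) ^ l ≤ ((C₁ + 1) * (1 + t) ^ (2 : ℝ)) ^ |l| := by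
    refine rpow_le_rpow_abs_of_inv_le_of_le (by linarith) ?_ (by nlinarith) l
    exact (inv_le_one_of_one_le₀ (by nlinarith)).trans (by linarith)
  have hxk : x ^ k ≤ (2 ^ θ * C₀ * (1 + t) ^ θ) ^ |k| := by
    refine (rpow_le_rpow_abs_of_inv_le_of_le hx hx₁ hx₂ k).trans ?_
    refine rpow_le_rpow (by positivity) ?_ (abs_nonneg k)
    calc C₀ * (2 + t) ^ θ ≤ C₀ * (2 * (1 + t)) ^ θ := by gcongr; linarith
      _ = 2 ^ θ * C₀ * (1 + t) ^ θ := by rw [mul_rpow zero_le_two (by linarith)]; ring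
  calc (b + 1) ^ l * x ^ k
      ≤ ((C₁ + 1) * (1 + t) ^ (2 : ℝ)) ^ |l| * (2 ^ θ * C₀ * (1 + t) ^ θ) ^ |k| := by
        gcongr
    _ = (C₁ + 1) ^ |l| * (2 ^ θ * C₀) ^ |k| * (1 + t) ^ (2 * |l| + θ * |k|) := by
        rw [mul_rpow (by linarith) (by positivity), mul_rpow (by positivity) (by positivity),
          ← rpow_mul (by linarith), ← rpow_mul (by linarith), rpow_add (by linarith)]
        ring

lemma le_mul_one_add_rpow_two {ρ : ℂ → ℝ} {β : ℂ → ℂ → ℝ} {C δ : ℝ} (hρ : ∀ z, 0 < ρ z)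
    (hC : 0 ≤ C) (hδ : 0 < δ ∧ δ < 1)
    (hnear : ∀ z w : ℂ, w ∈ ball z (1 * ρ z) → β z w ≤ C * (‖z - w‖ / ρ z))
    (hfar : ∀ z w : ℂ, w ∉ ball z (1 * ρ z) → β z w ≤ C * (‖z - w‖ / ρ z) ^ (2 - δ))
    (z w : ℂ) : β z w ≤ C * (1 + ‖z - w‖ / ρ z) ^ (2 : ℝ) := by
  have ht : 0 ≤ ‖z - w‖ / ρ z := div_nonneg (norm_nonneg _) (hρ z).le
  by_cases hw : w ∈ ball z (1 * ρ z)
  · refine (hnear z w hw).trans (mul_le_mul_of_nonneg_left ?_ hC)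
    simpa using rpow_le_one_add_rpow_two ht zero_le_one one_le_two
  · refine (hfar z w hw).trans (mul_le_mul_of_nonneg_left ?_ hC)
    exact rpow_le_one_add_rpow_two ht (by linarith) (by linarith)

lemma add_one_rpow_mul_rpow_le_mul_one_add_rpow {ρ : ℂ → ℝ} {β : ℂ → ℂ → ℝ} {C₀ C₁ θ : ℝ}
    (hρ : ∀ z, 0 < ρ z) (hC₀ : 0 < C₀) (hθ : 0 ≤ θ)
    (hρ₂ : ∀ (z w : ℂ) (r : ℝ), 1 < r → w ∈ ball z (r * ρ z) →
      (C₀ * r ^ θ)⁻¹ ≤ ρ w / ρ z ∧ ρ w / ρ z ≤ C₀ * r ^ θ)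
    (hβnonneg : ∀ z w, 0 ≤ β z w) (hC₁ : 0 ≤ C₁)
    (hβ : ∀ z w, β z w ≤ C₁ * (1 + ‖z - w‖ / ρ z) ^ (2 : ℝ)) (z w : ℂ) (k l : ℝ) :
    (β z w + 1) ^ l * ρ w ^ k ≤ (C₁ + 1) ^ |l| * (2 ^ θ * C₀) ^ |k| * ρ z ^ k *
      (1 + ‖z - w‖ / ρ z) ^ (2 * |l| + θ * |k|) := by
  set t := ‖z - w‖ / ρ z
  have ht : 0 ≤ t := div_nonneg (norm_nonneg _) (hρ z).le
  have hw : w ∈ ball z ((2 + t) * ρ z) := by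
    rw [mem_ball, dist_comm, dist_eq_norm, add_mul, div_mul_cancel₀ _ (hρ z).ne']
    linarith [hρ z]
  obtain ⟨hx₁, hx₂⟩ := hρ₂ z w (2 + t) (by linarith) hw
  have h := add_one_rpow_mul_rpow_le (hβnonneg z w) ht hC₀ hC₁ hθ (hβ z w)
    (div_pos (hρ w) (hρ z)) hx₁ hx₂ k l
  rw [div_rpow (hρ w).le (hρ z).le, ← mul_div_assoc, div_le_iff₀ (rpow_pos_of_pos (hρ z) k)] at h
  linarith

theorem stmt2_general
    (ρ : ℂ → ℝ) (hρ : ∀ z, 0 < ρ z)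
    (C₀ θ : ℝ) (hC₀ : 0 < C₀) (hθ : 0 < θ)
    (hρ₂ : ∀ (z w : ℂ) (r : ℝ), 1 < r → w ∈ Metric.ball z (r * ρ z) →
      (C₀ * r ^ θ)⁻¹ ≤ ρ w / ρ z ∧ ρ w / ρ z ≤ C₀ * r ^ θ)
    (β : ℂ → ℂ → ℝ)
    (hβnonneg : ∀ z w, 0 ≤ β z w)
    (δ : ℝ) (hδ : 0 < δ ∧ δ < 1)
    (hβ : ∀ r : ℝ, 0 < r → ∃ Cr : ℝ, 0 < Cr ∧
      (∀ z w : ℂ, w ∈ Metric.ball z (r * ρ z) →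
        Cr⁻¹ * (‖z - w‖ / ρ z) ≤ β z w ∧
        β z w ≤ Cr * (‖z - w‖ / ρ z)) ∧
      (∀ z w : ℂ, w ∉ Metric.ball z (r * ρ z) →
        Cr⁻¹ * (‖z - w‖ / ρ z) ^ δ ≤ β z w ∧
        β z w ≤ Cr * (‖z - w‖ / ρ z) ^ (2 - δ)))
    (p ε k l : ℝ) (hp : 0 < p) (hε : 0 < ε) :
    ∃ C : ℝ, 0 < C ∧ ∀ z : ℂ,
      (∫⁻ w : ℂ, ENNReal.ofReal ((β z w + 1) ^ l * ρ w ^ k *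
          Real.exp (-p * (‖z - w‖ / ρ z) ^ ε))) ≤
        ENNReal.ofReal (C * ρ z ^ (k + 2)) := by
  obtain ⟨C₁, hC₁, hβ_near, hβ_far⟩ := hβ 1 one_pos
  have hβ_le := le_mul_one_add_rpow_two hρ hC₁.le hδ (fun z w hw => (hβ_near z w hw).2)
    (fun z w hw => (hβ_far z w hw).2)
  set a := 2 * |l| + θ * |k|
  obtain ⟨C₂, hC₂, hexp⟩ := exists_exp_neg_mul_rpow_le_mul_one_add_rpow_neg hp hε (a + 3)
  set P := (C₁ + 1) ^ |l| * (2 ^ θ * C₀) ^ |k|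
  set I := ∫⁻ x : ℂ, ENNReal.ofReal ((1 + ‖x‖) ^ (-3 : ℝ))
  have hI : I < ∞ := finite_integral_one_add_norm (by norm_num [Complex.finrank_real_complex])
  refine ⟨P * C₂ * I.toReal + 1, by positivity, fun z => ?_⟩
  have hρz := hρ z
  have hpt (w : ℂ) : (β z w + 1) ^ l * ρ w ^ k * exp (-p * (‖z - w‖ / ρ z) ^ ε) ≤
      P * C₂ * ρ z ^ k * (1 + ‖z - w‖ / ρ z) ^ (-3 : ℝ) := by
    have ht : 0 ≤ ‖z - w‖ / ρ z := div_nonneg (norm_nonneg _) hρz.le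
    calc _ ≤ P * ρ z ^ k * (1 + ‖z - w‖ / ρ z) ^ a *
          (C₂ * (1 + ‖z - w‖ / ρ z) ^ (-(a + 3))) := by
          rw [neg_mul]
          exact mul_le_mul (add_one_rpow_mul_rpow_le_mul_one_add_rpow hρ hC₀ hθ.le hρ₂ hβnonneg
            hC₁.le hβ_le z w k l) (hexp _ ht) (exp_pos _).le (by positivity)
      _ = _ := by
          rw [mul_mul_mul_comm, ← rpow_add (by linarith)]
          ring_nf
  calc _ ≤ ENNReal.ofReal (P * C₂ * ρ z ^ k * ρ z ^ finrank ℝ ℂ) * I :=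
        lintegral_le_of_le_mul_one_add_norm_sub_div_rpow volume (by positivity) hρz z hpt
    _ ≤ ENNReal.ofReal ((P * C₂ * I.toReal + 1) * ρ z ^ (k + 2)) := by
        rw [← ENNReal.ofReal_toReal hI.ne, ← ENNReal.ofReal_mul (by positivity),
          ENNReal.toReal_ofReal ENNReal.toReal_nonneg, Complex.finrank_real_complex,
          rpow_add hρz, rpow_two]
        refine ENNReal.ofReal_le_ofReal ?_
        have : 0 ≤ ρ z ^ k * ρ z ^ 2 := by positivity
        nlinarith

/-- For all `p, ε > 0` and `k, l ∈ ℝ` there is `C > 0` such that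
`∫_ℂ (β(z,w)+1)^l ρ(w)^k e^{-p(|z-w|/ρ(z))^ε} dA(w) ≤ C ρ(z)^{k+2}` for every `z ∈ ℂ`. -/
theorem stmt2
    (ρ : ℂ → ℝ) (hρ : ∀ z, 0 < ρ z)
    (C₀ θ : ℝ) (hC₀ : 0 < C₀) (hθ : 0 < θ)
    (hρ₁ : ∀ (z w : ℂ) (r : ℝ), 0 < r → r ≤ 1 → w ∈ Metric.ball z (r * ρ z) →
      C₀⁻¹ ≤ ρ w / ρ z ∧ ρ w / ρ z ≤ C₀)
    (hρ₂ : ∀ (z w : ℂ) (r : ℝ), 1 < r → w ∈ Metric.ball z (r * ρ z) →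
      (C₀ * r ^ θ)⁻¹ ≤ ρ w / ρ z ∧ ρ w / ρ z ≤ C₀ * r ^ θ)
    (β : ℂ → ℂ → ℝ)
    (hβsymm : ∀ z w, β z w = β w z) (hβnonneg : ∀ z w, 0 ≤ β z w)
    (hβeq : ∀ z w, β z w = 0 ↔ z = w)
    (hβtri : ∀ z w u, β z u ≤ β z w + β w u)
    (δ : ℝ) (hδ : 0 < δ ∧ δ < 1)
    (hβ : ∀ r : ℝ, 0 < r → ∃ Cr : ℝ, 0 < Cr ∧
      (∀ z w : ℂ, w ∈ Metric.ball z (r * ρ z) →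
        Cr⁻¹ * (‖z - w‖ / ρ z) ≤ β z w ∧
        β z w ≤ Cr * (‖z - w‖ / ρ z)) ∧
      (∀ z w : ℂ, w ∉ Metric.ball z (r * ρ z) →
        Cr⁻¹ * (‖z - w‖ / ρ z) ^ δ ≤ β z w ∧
        β z w ≤ Cr * (‖z - w‖ / ρ z) ^ (2 - δ)))
    (p ε k l : ℝ) (hp : 0 < p) (hε : 0 < ε) :
    ∃ C : ℝ, 0 < C ∧ ∀ z : ℂ,
      (∫⁻ w : ℂ, ENNReal.ofReal ((β z w + 1) ^ l * ρ w ^ k *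
          Real.exp (-p * (‖z - w‖ / ρ z) ^ ε))) ≤
        ENNReal.ofReal (C * ρ z ^ (k + 2)) :=
  stmt2_general ρ hρ C₀ θ hC₀ hθ hρ₂ β hβnonneg δ hδ hβ p ε k l hp hε
end

section
/- For all p, ε > 0 and all k, l ∈ ℝ, the quantity sup_{z∈ℂ} ρ(z)^{−(k+2)} ∫_{ℂ \ B(z,R)} (β(z,w) + 1)^l ρ(w)^k e^{−p(|z−w|/ρ(z))^ε} dA(w) tends to 0 as R → ∞. -/
/-!
On `{w | R ≤ β z w}` the normalized distance `t = ‖z - w‖ / ρ z` is large: inside `D¹(z)` one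
has `β z w ≤ C t < C`, and outside `β z w ≤ C t ^ (2 - δ)`, so `R ≥ C T ^ (2 - δ)` forces
`t ≥ T`. For `t ≥ 1` the point `w` lies in `D^{2t}(z)`, so `ρ w / ρ z` is within a factor
`C₀ (2t)^θ` of `1`, and `β z w + 1 ≤ (C + 1) t²`; hence the integrand is at most
`A ρ(z)^k t^M e^{-p t^ε}` for constants `A`, `M`. Half of the exponential factor absorbs
`t^M` and is uniformly small for `t ≥ T`; the other half integrates, after the substitution
`u = (z - w) / ρ z`, to `ρ(z)² ∫ e^{-(p/2)‖u‖^ε} du < ∞`.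
-/

open MeasureTheory Filter Metric Set Asymptotics Module
open scoped Topology

theorem tendsto_rpow_mul_exp_neg_mul_rpow_atTop (a : ℝ) {c ε : ℝ} (hc : 0 < c) (hε : 0 < ε) :
    Tendsto (fun t : ℝ => t ^ a * Real.exp (-c * t ^ ε)) atTop (𝓝 0) := by
  refine ((tendsto_rpow_mul_exp_neg_mul_atTop_nhds_zero (a / ε) c hc).comp
    (tendsto_rpow_atTop hε)).congr' ?_
  filter_upwards [eventually_ge_atTop 0] with t ht
  rw [Function.comp_apply, ← Real.rpow_mul ht, mul_div_cancel₀ a hε.ne']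

theorem exists_forall_ge_rpow_mul_exp_neg_mul_rpow_le (a : ℝ) {c ε η : ℝ} (hc : 0 < c)
    (hε : 0 < ε) (hη : 0 < η) :
    ∃ T : ℝ, 1 ≤ T ∧ ∀ t, T ≤ t → t ^ a * Real.exp (-c * t ^ ε) ≤ η := by
  obtain ⟨T, hT⟩ := eventually_atTop.1 <| (eventually_ge_atTop 1).and <|
    (tendsto_rpow_mul_exp_neg_mul_rpow_atTop a hc hε).eventually (ge_mem_nhds hη)
  exact ⟨T, (hT T le_rfl).1, fun t ht => (hT t ht).2⟩

theorem tendsto_one_add_rpow_mul_exp_neg_mul_rpow_atTop (a : ℝ) {c ε : ℝ} (hc : 0 < c)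
    (hε : 0 < ε) :
    Tendsto (fun t : ℝ => (1 + t) ^ a * Real.exp (-c * t ^ ε)) atTop (𝓝 0) := by
  have hratio : Tendsto (fun t : ℝ => ((1 + t) / t) ^ a) atTop (𝓝 1) := by
    have h : Tendsto (fun t : ℝ => t⁻¹ + 1) atTop (𝓝 1) := by
      simpa using tendsto_inv_atTop_zero.add_const (1 : ℝ)
    replace h : Tendsto (fun t : ℝ => (1 + t) / t) atTop (𝓝 1) :=
      h.congr' ((eventually_gt_atTop 0).mono fun t ht => by field_simp)
    simpa using h.rpow_const (Or.inl one_ne_zero)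
  simpa only [one_mul] using
    (hratio.mul (tendsto_rpow_mul_exp_neg_mul_rpow_atTop a hc hε)).congr' <|
    (eventually_gt_atTop 0).mono fun t ht => by
      rw [← mul_assoc, ← Real.mul_rpow (by positivity) ht.le, div_mul_cancel₀ _ ht.ne']

theorem rpow_le_rpow_abs_of_one_le {b Y : ℝ} (l : ℝ) (hb : 1 ≤ b) (hbY : b ≤ Y) :
    b ^ l ≤ Y ^ |l| := by
  rcases le_or_gt 0 l with hl | hl
  · rw [abs_of_nonneg hl]
    exact Real.rpow_le_rpow (by linarith) hbY hl
  · calc b ^ l ≤ 1 := Real.rpow_le_one_of_one_le_of_nonpos hb hl.le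
      _ ≤ Y ^ |l| := Real.one_le_rpow (hb.trans hbY) (abs_nonneg l)

theorem rpow_le_mul_rpow_abs_of_div_mem_Icc {x y D : ℝ} (k : ℝ) (hx : 0 < x) (hy : 0 < y)
    (hxy : y / x ∈ Icc D⁻¹ D) : y ^ k ≤ x ^ k * D ^ |k| := by
  have hD : 0 < D := (div_pos hy hx).trans_le hxy.2
  have hy_eq : y ^ k = x ^ k * (y / x) ^ k := by
    rw [Real.div_rpow hy.le hx.le, mul_div_cancel₀ _ (Real.rpow_pos_of_pos hx k).ne']
  rw [hy_eq]
  refine mul_le_mul_of_nonneg_left ?_ (Real.rpow_nonneg hx.le k)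
  rcases le_or_gt 0 k with hk | hk
  · rw [abs_of_nonneg hk]
    exact Real.rpow_le_rpow (div_pos hy hx).le hxy.2 hk
  · rw [abs_of_neg hk, Real.rpow_neg hD.le, ← Real.inv_rpow hD.le]
    exact Real.rpow_le_rpow_of_nonpos (inv_pos.2 hD) hxy.1 hk.le

theorem add_one_rpow_le_of_le_mul_rpow {b C s t : ℝ} (l : ℝ) (hb : 0 ≤ b) (hC : 0 ≤ C)
    (hs : s ≤ 2) (ht : 1 ≤ t) (hbt : b ≤ C * t ^ s) :
    (b + 1) ^ l ≤ (C + 1) ^ |l| * t ^ (2 * |l|) := by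
  have ht2 : 1 ≤ t ^ (2 : ℝ) := Real.one_le_rpow ht zero_le_two
  have hb1 : b + 1 ≤ (C + 1) * t ^ (2 : ℝ) := by
    have := mul_le_mul_of_nonneg_left (Real.rpow_le_rpow_of_exponent_le ht hs) hC
    nlinarith
  calc (b + 1) ^ l ≤ ((C + 1) * t ^ (2 : ℝ)) ^ |l| :=
        rpow_le_rpow_abs_of_one_le l (by linarith) hb1
    _ = (C + 1) ^ |l| * t ^ (2 * |l|) := by
        rw [Real.mul_rpow (by linarith) (by linarith), ← Real.rpow_mul (by linarith)]

theorem mul_exp_neg_le_of_le_mul_rpow {x P t M p ε η : ℝ} (hP : 0 ≤ P) (hx : x ≤ P * t ^ M)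
    (hη : t ^ M * Real.exp (-(p / 2) * t ^ ε) ≤ η) :
    x * Real.exp (-p * t ^ ε) ≤ P * η * Real.exp (-(p / 2) * t ^ ε) := by
  have hexp : Real.exp (-p * t ^ ε) =
      Real.exp (-(p / 2) * t ^ ε) * Real.exp (-(p / 2) * t ^ ε) := by
    rw [← Real.exp_add]; ring_nf
  calc x * Real.exp (-p * t ^ ε) ≤ P * t ^ M * Real.exp (-p * t ^ ε) := by gcongr
    _ = P * (t ^ M * Real.exp (-(p / 2) * t ^ ε)) * Real.exp (-(p / 2) * t ^ ε) := by
        rw [hexp]; ring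
    _ ≤ P * η * Real.exp (-(p / 2) * t ^ ε) := by gcongr

section HaarIntegral

variable {E : Type*} [NormedAddCommGroup E] [NormedSpace ℝ E] [FiniteDimensional ℝ E]
  [MeasurableSpace E] [BorelSpace E] (μ : Measure E) [μ.IsAddHaarMeasure]

theorem integrable_exp_neg_mul_norm_rpow {c ε : ℝ} (hc : 0 < c) (hε : 0 < ε) :
    Integrable (fun u : E => Real.exp (-c * ‖u‖ ^ ε)) μ := by
  set r : ℝ := finrank ℝ E + 1
  have hcont : Continuous fun u : E => Real.exp (-c * ‖u‖ ^ ε) :=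
    Real.continuous_exp.comp (continuous_const.mul
      (continuous_norm.rpow_const fun _ => Or.inr hε.le))
  refine hcont.locallyIntegrable.integrable_of_isBigO_cocompact ?_
    ((integrable_one_add_norm (E := E) (μ := μ) (r := r) (by simp [r])).integrableAtFilter _)
  refine IsBigO.of_bound' ?_
  filter_upwards [tendsto_norm_cocompact_atTop.eventually
    ((tendsto_one_add_rpow_mul_exp_neg_mul_rpow_atTop r hc hε).eventually (ge_mem_nhds one_pos))]
    with u hu
  have hpos : 0 < (1 + ‖u‖) ^ r := by positivity
  rw [Real.norm_of_nonneg (Real.exp_pos _).le, Real.norm_of_nonneg (by positivity),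
    Real.rpow_neg (by positivity), ← one_div, le_div_iff₀ hpos, mul_comm]
  exact hu

theorem integral_comp_norm_sub_div {F : Type*} [NormedAddCommGroup F] [NormedSpace ℝ F]
    (f : ℝ → F) (z : E) {R : ℝ} (hR : 0 ≤ R) :
    ∫ w, f (‖z - w‖ / R) ∂μ = R ^ finrank ℝ E • ∫ u, f ‖u‖ ∂μ := by
  rw [integral_sub_left_eq_self (fun u => f (‖u‖ / R)) μ z,
    ← Measure.integral_comp_inv_smul_of_nonneg μ (fun u => f ‖u‖) hR]
  simp_rw [norm_smul, Real.norm_of_nonneg (inv_nonneg.2 hR), inv_mul_eq_div]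

theorem setLIntegral_ofReal_le_of_le_mul_exp_neg {s : Set E} {f : E → ℝ} {z : E}
    {R D c ε : ℝ} (hR : 0 < R) (hD : 0 ≤ D) (hc : 0 < c) (hε : 0 < ε)
    (hf : ∀ w ∈ s, f w ≤ D * Real.exp (-c * (‖z - w‖ / R) ^ ε)) :
    ∫⁻ w in s, ENNReal.ofReal (f w) ∂μ ≤
      ENNReal.ofReal (D * (R ^ finrank ℝ E * ∫ u, Real.exp (-c * ‖u‖ ^ ε) ∂μ)) := by
  have hint : Integrable (fun w => D * Real.exp (-c * (‖z - w‖ / R) ^ ε)) μ := by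
    have := (integrable_exp_neg_mul_norm_rpow μ hc hε).comp_smul (inv_ne_zero hR.ne')
    refine ((this.comp_sub_left z).const_mul D).congr (ae_of_all _ fun w => ?_)
    simp only [norm_smul, Real.norm_of_nonneg (inv_nonneg.2 hR.le), inv_mul_eq_div]
  calc ∫⁻ w in s, ENNReal.ofReal (f w) ∂μ
      ≤ ∫⁻ w in s, ENNReal.ofReal (D * Real.exp (-c * (‖z - w‖ / R) ^ ε)) ∂μ :=
        setLIntegral_mono (by fun_prop) fun w hw => ENNReal.ofReal_le_ofReal (hf w hw)
    _ ≤ ∫⁻ w, ENNReal.ofReal (D * Real.exp (-c * (‖z - w‖ / R) ^ ε)) ∂μ :=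
        setLIntegral_le_lintegral _ _
    _ = ENNReal.ofReal (∫ w, D * Real.exp (-c * (‖z - w‖ / R) ^ ε) ∂μ) :=
        (ofReal_integral_eq_lintegral_ofReal hint (ae_of_all _ fun w => by positivity)).symm
    _ = _ := by
        rw [integral_const_mul,
          integral_comp_norm_sub_div μ (fun t => Real.exp (-c * t ^ ε)) z hR.le, smul_eq_mul]

end HaarIntegral

section Weight

variable {X : Type*} [SeminormedAddCommGroup X] {ρ : X → ℝ} {z w : X}

theorem mem_ball_mul_iff {r : ℝ} (hρz : 0 < ρ z) :
    w ∈ ball z (r * ρ z) ↔ ‖z - w‖ / ρ z < r := by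
  rw [mem_ball, dist_comm, dist_eq_norm, div_lt_iff₀ hρz]

theorem le_norm_sub_div_of_mul_rpow_le {β : X → X → ℝ} {C s T : ℝ} (hρz : 0 < ρ z)
    (hC : 0 < C) (hs : 0 < s)
    (hin : w ∈ ball z (1 * ρ z) → β z w ≤ C * (‖z - w‖ / ρ z))
    (hout : w ∉ ball z (1 * ρ z) → β z w ≤ C * (‖z - w‖ / ρ z) ^ s)
    (hT : 1 ≤ T) (hw : C * T ^ s ≤ β z w) : T ≤ ‖z - w‖ / ρ z := by
  have hTs : 1 ≤ T ^ s := Real.one_le_rpow hT hs.le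
  by_cases hball : w ∈ ball z (1 * ρ z)
  · have ht := (mem_ball_mul_iff hρz).1 hball
    nlinarith [hin hball]
  · have ht : 1 ≤ ‖z - w‖ / ρ z := not_lt.1 ((mem_ball_mul_iff hρz).not.1 hball)
    have := hw.trans (hout hball)
    exact (Real.rpow_le_rpow_iff (by linarith) (by linarith) hs).1 (le_of_mul_le_mul_left this hC)

theorem rpow_apply_le_of_one_le_norm_sub_div {C₀ θ : ℝ} (k : ℝ) (hρz : 0 < ρ z) (hρw : 0 < ρ w)
    (hC₀ : 0 ≤ C₀) (ht : 1 ≤ ‖z - w‖ / ρ z)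
    (hρ₂ : ∀ r : ℝ, 1 < r → w ∈ ball z (r * ρ z) →
      (C₀ * r ^ θ)⁻¹ ≤ ρ w / ρ z ∧ ρ w / ρ z ≤ C₀ * r ^ θ) :
    ρ w ^ k ≤ (C₀ * 2 ^ θ) ^ |k| * ρ z ^ k * (‖z - w‖ / ρ z) ^ (θ * |k|) := by
  set t := ‖z - w‖ / ρ z
  calc ρ w ^ k ≤ ρ z ^ k * (C₀ * (2 * t) ^ θ) ^ |k| :=
        rpow_le_mul_rpow_abs_of_div_mem_Icc k hρz hρw
          (hρ₂ (2 * t) (by linarith) ((mem_ball_mul_iff hρz).2 (by linarith)))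
    _ = (C₀ * 2 ^ θ) ^ |k| * ρ z ^ k * t ^ (θ * |k|) := by
        have ht0 : 0 ≤ t := by linarith
        rw [Real.mul_rpow zero_le_two ht0, ← mul_assoc,
          Real.mul_rpow (by positivity) (Real.rpow_nonneg ht0 θ), ← Real.rpow_mul ht0]
        ring

theorem add_one_rpow_mul_rpow_apply_le {b C C₀ s θ : ℝ} (l k : ℝ) (hρz : 0 < ρ z) (hρw : 0 < ρ w)
    (hb : 0 ≤ b) (hC : 0 ≤ C) (hC₀ : 0 ≤ C₀) (hs : s ≤ 2) (ht : 1 ≤ ‖z - w‖ / ρ z)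
    (hout : w ∉ ball z (1 * ρ z) → b ≤ C * (‖z - w‖ / ρ z) ^ s)
    (hρ₂ : ∀ r : ℝ, 1 < r → w ∈ ball z (r * ρ z) →
      (C₀ * r ^ θ)⁻¹ ≤ ρ w / ρ z ∧ ρ w / ρ z ≤ C₀ * r ^ θ) :
    (b + 1) ^ l * ρ w ^ k ≤
      (C + 1) ^ |l| * (C₀ * 2 ^ θ) ^ |k| * ρ z ^ k * (‖z - w‖ / ρ z) ^ (2 * |l| + θ * |k|) := by
  calc (b + 1) ^ l * ρ w ^ k
      ≤ ((C + 1) ^ |l| * (‖z - w‖ / ρ z) ^ (2 * |l|)) *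
          ((C₀ * 2 ^ θ) ^ |k| * ρ z ^ k * (‖z - w‖ / ρ z) ^ (θ * |k|)) :=
        mul_le_mul (add_one_rpow_le_of_le_mul_rpow l hb hC hs ht
            (hout ((mem_ball_mul_iff hρz).not.2 ht.not_gt)))
          (rpow_apply_le_of_one_le_norm_sub_div k hρz hρw hC₀ ht hρ₂)
          (by positivity) (by positivity)
    _ = _ := by rw [Real.rpow_add (by linarith)]; ring

end Weight

theorem stmt3_general
    (ρ : ℂ → ℝ) (hρ : ∀ z, 0 < ρ z)
    (C₀ θ : ℝ) (hC₀ : 0 < C₀)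
    (hρ₂ : ∀ (z w : ℂ) (r : ℝ), 1 < r → w ∈ Metric.ball z (r * ρ z) →
      (C₀ * r ^ θ)⁻¹ ≤ ρ w / ρ z ∧ ρ w / ρ z ≤ C₀ * r ^ θ)
    (β : ℂ → ℂ → ℝ)
    (hβnonneg : ∀ z w, 0 ≤ β z w)
    (δ : ℝ) (hδ : 0 < δ ∧ δ < 1)
    (hβ : ∀ r : ℝ, 0 < r → ∃ Cr : ℝ, 0 < Cr ∧
      (∀ z w : ℂ, w ∈ Metric.ball z (r * ρ z) →
        Cr⁻¹ * (‖z - w‖ / ρ z) ≤ β z w ∧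
        β z w ≤ Cr * (‖z - w‖ / ρ z)) ∧
      (∀ z w : ℂ, w ∉ Metric.ball z (r * ρ z) →
        Cr⁻¹ * (‖z - w‖ / ρ z) ^ δ ≤ β z w ∧
        β z w ≤ Cr * (‖z - w‖ / ρ z) ^ (2 - δ)))
    (p ε k l : ℝ) (hp : 0 < p) (hε : 0 < ε) :
    ∀ e : ℝ, 0 < e → ∃ R₀ : ℝ, ∀ R : ℝ, R₀ ≤ R → ∀ z : ℂ,
      (∫⁻ w in {w : ℂ | R ≤ β z w}, ENNReal.ofReal ((β z w + 1) ^ l * ρ w ^ k *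
          Real.exp (-p * (‖z - w‖ / ρ z) ^ ε))) ≤
        ENNReal.ofReal (e * ρ z ^ (k + 2)) := by
  intro e he
  obtain ⟨C, hC, hβin, hβout⟩ := hβ 1 one_pos
  set A := (C + 1) ^ |l| * (C₀ * 2 ^ θ) ^ |k|
  have hA : 0 < A := by positivity
  set J := ∫ u : ℂ, Real.exp (-(p / 2) * ‖u‖ ^ ε)
  have hJ : 0 ≤ J := integral_nonneg fun _ => (Real.exp_pos _).le
  set η := e / (A * (J + 1))
  have hη : 0 < η := by positivity
  obtain ⟨T, hT1, hT⟩ :=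
    exists_forall_ge_rpow_mul_exp_neg_mul_rpow_le (2 * |l| + θ * |k|) (half_pos hp) hε hη
  refine ⟨C * T ^ (2 - δ), fun R hR z => ?_⟩
  have hρz := hρ z
  refine (setLIntegral_ofReal_le_of_le_mul_exp_neg volume hρz (z := z) (D := A * ρ z ^ k * η)
    (by positivity) (half_pos hp) hε fun w hw => ?_).trans (ENNReal.ofReal_le_ofReal ?_)
  · have hTt := le_norm_sub_div_of_mul_rpow_le hρz hC (by linarith)
      (fun hw => (hβin z w hw).2) (fun hw => (hβout z w hw).2) hT1 (hR.trans hw)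
    exact mul_exp_neg_le_of_le_mul_rpow (by positivity)
      (add_one_rpow_mul_rpow_apply_le l k hρz (hρ w) (hβnonneg z w) hC.le hC₀.le (by linarith)
        (hT1.trans hTt) (fun hw => (hβout z w hw).2) (hρ₂ z w)) (hT _ hTt)
  · rw [Complex.finrank_real_complex, Real.rpow_add hρz, Real.rpow_two]
    have hAηJ : A * η * J ≤ e := by
      rw [show A * η * J = e * (J / (J + 1)) by simp only [η]; field_simp]
      exact mul_le_of_le_one_right he.le (div_le_one_of_le₀ (by linarith) (by positivity))
    calc A * ρ z ^ k * η * (ρ z ^ 2 * J) = A * η * J * (ρ z ^ k * ρ z ^ 2) := by ring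
      _ ≤ e * (ρ z ^ k * ρ z ^ 2) := by gcongr

/-- The quantity
`sup_z ρ(z)^{-(k+2)} ∫_{ℂ∖B(z,R)} (β(z,w)+1)^l ρ(w)^k e^{-p(|z-w|/ρ(z))^ε} dA(w)`
tends to `0` as `R → ∞`; equivalently, for every `e > 0` there is `R₀` such that for all
`R ≥ R₀` and all `z` the tail integral is at most `e · ρ(z)^{k+2}`. -/
theorem stmt3
    (ρ : ℂ → ℝ) (hρ : ∀ z, 0 < ρ z)
    (C₀ θ : ℝ) (hC₀ : 0 < C₀) (hθ : 0 < θ)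
    (hρ₁ : ∀ (z w : ℂ) (r : ℝ), 0 < r → r ≤ 1 → w ∈ Metric.ball z (r * ρ z) →
      C₀⁻¹ ≤ ρ w / ρ z ∧ ρ w / ρ z ≤ C₀)
    (hρ₂ : ∀ (z w : ℂ) (r : ℝ), 1 < r → w ∈ Metric.ball z (r * ρ z) →
      (C₀ * r ^ θ)⁻¹ ≤ ρ w / ρ z ∧ ρ w / ρ z ≤ C₀ * r ^ θ)
    (β : ℂ → ℂ → ℝ)
    (hβsymm : ∀ z w, β z w = β w z) (hβnonneg : ∀ z w, 0 ≤ β z w)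
    (hβeq : ∀ z w, β z w = 0 ↔ z = w)
    (hβtri : ∀ z w u, β z u ≤ β z w + β w u)
    (δ : ℝ) (hδ : 0 < δ ∧ δ < 1)
    (hβ : ∀ r : ℝ, 0 < r → ∃ Cr : ℝ, 0 < Cr ∧
      (∀ z w : ℂ, w ∈ Metric.ball z (r * ρ z) →
        Cr⁻¹ * (‖z - w‖ / ρ z) ≤ β z w ∧
        β z w ≤ Cr * (‖z - w‖ / ρ z)) ∧
      (∀ z w : ℂ, w ∉ Metric.ball z (r * ρ z) →
        Cr⁻¹ * (‖z - w‖ / ρ z) ^ δ ≤ β z w ∧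
        β z w ≤ Cr * (‖z - w‖ / ρ z) ^ (2 - δ)))
    (p ε k l : ℝ) (hp : 0 < p) (hε : 0 < ε) :
    ∀ e : ℝ, 0 < e → ∃ R₀ : ℝ, ∀ R : ℝ, R₀ ≤ R → ∀ z : ℂ,
      (∫⁻ w in {w : ℂ | R ≤ β z w}, ENNReal.ofReal ((β z w + 1) ^ l * ρ w ^ k *
          Real.exp (-p * (‖z - w‖ / ρ z) ^ ε))) ≤
        ENNReal.ofReal (e * ρ z ^ (k + 2)) :=
  stmt3_general ρ hρ C₀ θ hC₀ hρ₂ β hβnonneg δ hδ hβ p ε k l hp hε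
end

section
/- For every p > 0 and every l ∈ ℝ there exists a constant C > 0 such that ∫_ℂ (β(z,ξ) + 1)^l |K(z,ξ)|^p e^{−pφ(ξ)} dA(ξ) ≤ C ρ(z)^{2(1−p)} e^{pφ(z)} for every z ∈ ℂ. -/
/-!
Write `t = |z - ξ| / ρ(z)` and `s = |z - ξ| / ρ(ξ)`. The growth condition on `ρ` at radius `t + 2`
gives `ρ(z) ≤ C₀ (t + 2)^θ ρ(ξ)` and, with the roles of `z` and `ξ` exchanged,
`t ≤ C₀ (s + 2)^(θ + 1)`. Hence the decay `exp (-s^ε)` of the kernel, which is measured from `ξ`,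
is at most `e · exp (-b t^(ε / (θ + 1)))`, measured from `z`. Together with `β(z, ξ) ≤ C (t + 2)²`
this bounds the integrand by `ρ(z)^(-2p) e^(pφ(z))` times `(t + 2)^m exp (-b' t^ε')`, and the
substitution `ξ = z + ρ(z) u` turns the integral of the latter into `ρ(z)²` times a finite constant.
-/

open MeasureTheory Filter Metric Set
open scoped ENNReal Topology

namespace Real

lemma rpow_le_rpow_max_zero {x y : ℝ} (hx : 1 ≤ x) (hxy : x ≤ y) (l : ℝ) :
    x ^ l ≤ y ^ max l 0 := by
  rcases le_total 0 l with hl | hl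
  · rw [max_eq_left hl]
    exact rpow_le_rpow (by linarith) hxy hl
  · rw [max_eq_right hl, rpow_zero]
    exact rpow_le_one_of_one_le_of_nonpos hx hl

lemma add_two_rpow_le {s e : ℝ} (hs : 0 ≤ s) (he : 0 ≤ e) :
    (s + 2) ^ e ≤ 4 ^ e * (s ^ e + 1) := by
  have hse : 0 ≤ s ^ e := rpow_nonneg hs e
  rcases le_total s 2 with h | h
  · calc (s + 2) ^ e ≤ 4 ^ e := rpow_le_rpow (by linarith) (by linarith) he
      _ ≤ 4 ^ e * (s ^ e + 1) := le_mul_of_one_le_right (by positivity) (by linarith)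
  · calc (s + 2) ^ e ≤ (2 * s) ^ e := rpow_le_rpow (by linarith) (by linarith) he
      _ = 2 ^ e * s ^ e := mul_rpow zero_le_two hs
      _ ≤ 4 ^ e * (s ^ e + 1) := by gcongr <;> norm_num

lemma exists_add_two_rpow_mul_exp_neg_le {k a e : ℝ} (hk : 0 ≤ k) (ha : 0 < a) (he : 0 < e) :
    ∃ M, ∀ t, 0 ≤ t → (t + 2) ^ k * exp (-(a * t ^ e)) ≤ M := by
  have hlim : Tendsto (fun t : ℝ => t ^ k * exp (-(a * t ^ e))) atTop (𝓝 0) := by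
    refine ((tendsto_rpow_mul_exp_neg_mul_atTop_nhds_zero (k / e) a ha).comp
      (tendsto_rpow_atTop he)).congr' ?_
    filter_upwards [eventually_ge_atTop 0] with t ht
    simp [← rpow_mul ht, mul_div_cancel₀ _ he.ne']
  obtain ⟨T, hT⟩ := eventually_atTop.1 (hlim.eventually (ge_mem_nhds one_pos))
  refine ⟨(max T 2 + 2) ^ k + 2 ^ k, fun t ht => ?_⟩
  have hexp : exp (-(a * t ^ e)) ≤ 1 := exp_le_one_iff.2 (by
    have := rpow_nonneg ht e
    nlinarith)
  rcases le_total t (max T 2) with h | h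
  · calc (t + 2) ^ k * exp (-(a * t ^ e)) ≤ (max T 2 + 2) ^ k * 1 := by gcongr
      _ ≤ (max T 2 + 2) ^ k + 2 ^ k := by linarith [rpow_nonneg zero_le_two k]
  · calc (t + 2) ^ k * exp (-(a * t ^ e)) ≤ (2 * t) ^ k * exp (-(a * t ^ e)) := by
          gcongr
          linarith [le_max_right T 2]
      _ = 2 ^ k * (t ^ k * exp (-(a * t ^ e))) := by rw [mul_rpow zero_le_two ht]; ring
      _ ≤ 2 ^ k * 1 := by gcongr; exact hT t (le_of_max_le_left h)
      _ ≤ (max T 2 + 2) ^ k + 2 ^ k := by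
          linarith [rpow_nonneg (by positivity : (0 : ℝ) ≤ max T 2 + 2) k]

lemma inv_mul_rpow_div_le_rpow_add_one {s t C τ ε : ℝ} (hs : 0 ≤ s) (ht : 0 ≤ t) (hC : 0 < C)
    (hτ : 0 < τ) (hε : 0 ≤ ε) (h : t ≤ C * (s + 2) ^ τ) :
    (4 ^ ε * C ^ (ε / τ))⁻¹ * t ^ (ε / τ) ≤ s ^ ε + 1 := by
  rw [inv_mul_le_iff₀ (by positivity)]
  calc t ^ (ε / τ) ≤ (C * (s + 2) ^ τ) ^ (ε / τ) := rpow_le_rpow ht h (by positivity)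
    _ = C ^ (ε / τ) * (s + 2) ^ ε := by
        rw [mul_rpow hC.le (by positivity), ← rpow_mul (by linarith), mul_div_cancel₀ _ hτ.ne']
    _ ≤ C ^ (ε / τ) * (4 ^ ε * (s ^ ε + 1)) := by gcongr; exact add_two_rpow_le hs hε
    _ = 4 ^ ε * C ^ (ε / τ) * (s ^ ε + 1) := by ring

end Real

section HaarMeasure

variable {E : Type*} [NormedAddCommGroup E] [NormedSpace ℝ E] [FiniteDimensional ℝ E]
  [MeasurableSpace E] [BorelSpace E] (μ : Measure E) [μ.IsAddHaarMeasure]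

lemma lintegral_norm_sub_div (f : ℝ → ℝ≥0∞) (hf : Measurable f) (z : E) {c : ℝ} (hc : 0 < c) :
    ∫⁻ ξ, f (‖z - ξ‖ / c) ∂μ = ENNReal.ofReal (c ^ Module.finrank ℝ E) * ∫⁻ u, f ‖u‖ ∂μ := by
  have hscale : ∀ ξ, ‖z - ξ‖ / c = ‖c⁻¹ • (ξ - z)‖ := fun ξ => by
    rw [norm_smul, Real.norm_eq_abs, abs_of_pos (inv_pos.2 hc), norm_sub_rev, inv_mul_eq_div]
  simp_rw [hscale]
  rw [lintegral_sub_right_eq_self (fun ξ => f ‖c⁻¹ • ξ‖) z,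
    ← lintegral_map (f := fun u => f ‖u‖) (hf.comp measurable_norm) (measurable_const_smul c⁻¹),
    Measure.map_addHaar_smul μ (inv_ne_zero hc.ne'), lintegral_smul_measure, inv_pow, inv_inv,
    abs_of_pos (by positivity), smul_eq_mul]

lemma lintegral_norm_add_two_rpow_mul_exp_neg_lt_top (m : ℝ) {a e : ℝ} (ha : 0 < a)
    (he : 0 < e) :
    ∫⁻ u, ENNReal.ofReal ((‖u‖ + 2) ^ m * Real.exp (-(a * ‖u‖ ^ e))) ∂μ < ∞ := by
  set r : ℝ := Module.finrank ℝ E + 1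
  obtain ⟨M, hM⟩ :=
    Real.exists_add_two_rpow_mul_exp_neg_le (k := max m 0 + r) (by positivity) ha he
  have hM0 : 0 ≤ M := (by positivity : (0 : ℝ) ≤ _).trans (hM 0 le_rfl)
  have hbound : ∀ t, 0 ≤ t → (t + 2) ^ m * Real.exp (-(a * t ^ e)) ≤ M * (1 + t) ^ (-r) := by
    intro t ht
    calc (t + 2) ^ m * Real.exp (-(a * t ^ e))
        ≤ (t + 2) ^ max m 0 * Real.exp (-(a * t ^ e)) := by
          gcongr
          · linarith
          · exact le_max_left m 0
      _ = (t + 2) ^ (max m 0 + r) * Real.exp (-(a * t ^ e)) * (t + 2) ^ (-r) := by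
          rw [Real.rpow_add (by linarith), Real.rpow_neg (by linarith)]
          field_simp
      _ ≤ M * (1 + t) ^ (-r) := by
          refine mul_le_mul (hM t ht) ?_ (by positivity) hM0
          exact Real.rpow_le_rpow_of_nonpos (by linarith) (by linarith)
            (by simp only [r, neg_nonpos]; positivity)
  calc ∫⁻ u, ENNReal.ofReal ((‖u‖ + 2) ^ m * Real.exp (-(a * ‖u‖ ^ e))) ∂μ
      ≤ ∫⁻ u, ENNReal.ofReal M * ENNReal.ofReal ((1 + ‖u‖) ^ (-r)) ∂μ :=
        lintegral_mono fun u => by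
          rw [← ENNReal.ofReal_mul hM0]
          exact ENNReal.ofReal_le_ofReal (hbound _ (norm_nonneg u))
    _ = ENNReal.ofReal M * ∫⁻ u, ENNReal.ofReal ((1 + ‖u‖) ^ (-r)) ∂μ :=
        lintegral_const_mul' _ _ ENNReal.ofReal_ne_top
    _ < ∞ := ENNReal.mul_lt_top ENNReal.ofReal_lt_top
        (finite_integral_one_add_norm (by simp [r]))

lemma exists_lintegral_le_of_le_mul_decay (m : ℝ) {a e : ℝ} (ha : 0 < a) (he : 0 < e) :
    ∃ J > 0, ∀ (F : E → ℝ) (z : E) {c D : ℝ}, 0 < c → 0 ≤ D →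
      (∀ ξ, F ξ ≤ D * ((‖z - ξ‖ / c + 2) ^ m * Real.exp (-(a * (‖z - ξ‖ / c) ^ e)))) →
      ∫⁻ ξ, ENNReal.ofReal (F ξ) ∂μ ≤ ENNReal.ofReal (J * c ^ Module.finrank ℝ E * D) := by
  set g : ℝ → ℝ := fun t => (t + 2) ^ m * Real.exp (-(a * t ^ e))
  set I := ∫⁻ u, ENNReal.ofReal (g ‖u‖) ∂μ
  have hI : I ≠ ∞ := (lintegral_norm_add_two_rpow_mul_exp_neg_lt_top μ m ha he).ne
  refine ⟨I.toReal + 1, by positivity, fun F z c D hc hD hF => ?_⟩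
  calc ∫⁻ ξ, ENNReal.ofReal (F ξ) ∂μ
      ≤ ∫⁻ ξ, ENNReal.ofReal D * ENNReal.ofReal (g (‖z - ξ‖ / c)) ∂μ :=
        lintegral_mono fun ξ => by
          rw [← ENNReal.ofReal_mul hD]
          exact ENNReal.ofReal_le_ofReal (hF ξ)
    _ = ENNReal.ofReal D * (ENNReal.ofReal (c ^ Module.finrank ℝ E) * I) := by
        rw [lintegral_const_mul' _ _ ENNReal.ofReal_ne_top,
          lintegral_norm_sub_div μ (fun t => ENNReal.ofReal (g t)) (by fun_prop) z hc]
    _ ≤ ENNReal.ofReal ((I.toReal + 1) * c ^ Module.finrank ℝ E * D) := by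
        conv_lhs => rw [← ENNReal.ofReal_toReal hI]
        rw [← ENNReal.ofReal_mul (by positivity), ← ENNReal.ofReal_mul hD]
        have : 0 ≤ c ^ Module.finrank ℝ E * D := by positivity
        exact ENNReal.ofReal_le_ofReal (by nlinarith)

end HaarMeasure

section Weight

variable {ρ : ℂ → ℝ} {C₀ θ : ℝ}

lemma le_mul_add_two_rpow_mul (hρ : ∀ z, 0 < ρ z) (hC₀ : 0 < C₀)
    (hρ₂ : ∀ (z w : ℂ) (r : ℝ), 1 < r → w ∈ ball z (r * ρ z) → (C₀ * r ^ θ)⁻¹ ≤ ρ w / ρ z)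
    (z w : ℂ) :
    ρ z ≤ C₀ * (‖z - w‖ / ρ z + 2) ^ θ * ρ w := by
  set t := ‖z - w‖ / ρ z
  have ht : 0 ≤ t := div_nonneg (norm_nonneg _) (hρ z).le
  have hw : w ∈ ball z ((t + 2) * ρ z) := by
    have hdist : dist w z = t * ρ z := by
      rw [dist_comm, dist_eq_norm, div_mul_cancel₀ _ (hρ z).ne']
    rw [mem_ball, hdist]
    nlinarith [hρ z]
  have h := hρ₂ z w (t + 2) (by linarith) hw
  rwa [le_div_iff₀ (hρ z), inv_mul_le_iff₀ (by positivity)] at h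

lemma norm_sub_div_le_mul_add_two_rpow (hρ : ∀ z, 0 < ρ z) (hC₀ : 0 < C₀)
    (hρ₂ : ∀ (z w : ℂ) (r : ℝ), 1 < r → w ∈ ball z (r * ρ z) → (C₀ * r ^ θ)⁻¹ ≤ ρ w / ρ z)
    (z w : ℂ) :
    ‖z - w‖ / ρ z ≤ C₀ * (‖w - z‖ / ρ w + 2) ^ (θ + 1) := by
  set s := ‖w - z‖ / ρ w
  have hs : 0 ≤ s := div_nonneg (norm_nonneg _) (hρ w).le
  rw [div_le_iff₀ (hρ z)]
  calc ‖z - w‖ = s * ρ w := by rw [norm_sub_rev, div_mul_cancel₀ _ (hρ w).ne']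
    _ ≤ s * (C₀ * (s + 2) ^ θ * ρ z) := by
        gcongr
        exact le_mul_add_two_rpow_mul hρ hC₀ hρ₂ w z
    _ ≤ (s + 2) * (C₀ * (s + 2) ^ θ * ρ z) := by
        gcongr
        · exact (mul_pos (mul_pos hC₀ (by positivity)) (hρ z)).le
        · linarith
    _ = C₀ * (s + 2) ^ (θ + 1) * ρ z := by
        rw [Real.rpow_add_one (by positivity)]
        ring

lemma norm_kernel_le (hρ : ∀ z, 0 < ρ z) (hC₀ : 0 < C₀) (hθ : 0 < θ + 1)
    (hρ₂ : ∀ (z w : ℂ) (r : ℝ), 1 < r → w ∈ ball z (r * ρ z) → (C₀ * r ^ θ)⁻¹ ≤ ρ w / ρ z)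
    {φ : ℂ → ℝ} {K : ℂ → ℂ → ℂ} {C ε : ℝ} (hC : 0 ≤ C) (hε : 0 ≤ ε)
    (hK : ∀ w z : ℂ, ‖K w z‖ ≤ C * (Real.exp (φ w + φ z) / (ρ w * ρ z)) *
      Real.exp (-((‖z - w‖ / ρ z) ^ ε))) (z ξ : ℂ) :
    ‖K z ξ‖ ≤ C * C₀ * Real.exp 1 * Real.exp (φ z + φ ξ) * ρ z ^ (-2 : ℝ) *
      (‖z - ξ‖ / ρ z + 2) ^ θ *
      Real.exp (-((4 ^ ε * C₀ ^ (ε / (θ + 1)))⁻¹ * (‖z - ξ‖ / ρ z) ^ (ε / (θ + 1)))) := by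
  set t := ‖z - ξ‖ / ρ z
  set s := ‖ξ - z‖ / ρ ξ
  have hρz := hρ z
  have hρξ := hρ ξ
  have hinv : (ρ ξ)⁻¹ ≤ C₀ * (t + 2) ^ θ * (ρ z)⁻¹ := by
    rw [inv_le_comm₀ hρξ (by positivity), mul_inv, inv_inv, ← div_eq_inv_mul,
      div_le_iff₀ (by positivity), mul_comm]
    exact le_mul_add_two_rpow_mul hρ hC₀ hρ₂ z ξ
  have hdecay : Real.exp (-(s ^ ε)) ≤
      Real.exp 1 * Real.exp (-((4 ^ ε * C₀ ^ (ε / (θ + 1)))⁻¹ * t ^ (ε / (θ + 1)))) := by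
    rw [← Real.exp_add, Real.exp_le_exp]
    have := Real.inv_mul_rpow_div_le_rpow_add_one (by positivity) (by positivity) hC₀ hθ hε
      (norm_sub_div_le_mul_add_two_rpow hρ hC₀ hρ₂ z ξ)
    linarith
  calc ‖K z ξ‖ ≤ C * Real.exp (φ z + φ ξ) * (ρ z)⁻¹ * (ρ ξ)⁻¹ * Real.exp (-(s ^ ε)) := by
        convert hK z ξ using 2
        field_simp
    _ ≤ C * Real.exp (φ z + φ ξ) * (ρ z)⁻¹ * (C₀ * (t + 2) ^ θ * (ρ z)⁻¹) *
        (Real.exp 1 * Real.exp (-((4 ^ ε * C₀ ^ (ε / (θ + 1)))⁻¹ * t ^ (ε / (θ + 1))))) := by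
        gcongr
    _ = _ := by
        rw [Real.rpow_neg hρz.le, Real.rpow_two]
        field_simp

lemma add_one_le_mul_add_two_rpow_two (hρ : ∀ z, 0 < ρ z) {β : ℂ → ℂ → ℝ} {C₁ δ r : ℝ}
    (hC₁ : 0 ≤ C₁) (hδ : 0 ≤ δ) (hδ₂ : δ ≤ 2)
    (hin : ∀ z w : ℂ, w ∈ ball z (r * ρ z) → β z w ≤ C₁ * (‖z - w‖ / ρ z))
    (hout : ∀ z w : ℂ, w ∉ ball z (r * ρ z) → β z w ≤ C₁ * (‖z - w‖ / ρ z) ^ (2 - δ))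
    (z w : ℂ) :
    β z w + 1 ≤ (C₁ + 1) * (‖z - w‖ / ρ z + 2) ^ (2 : ℝ) := by
  set t := ‖z - w‖ / ρ z
  have ht : 0 ≤ t := div_nonneg (norm_nonneg _) (hρ z).le
  have hsq : t + 1 ≤ (t + 2) ^ (2 : ℝ) := by
    rw [Real.rpow_two]
    nlinarith
  have hβ : β z w ≤ C₁ * (t + 2) ^ (2 : ℝ) := by
    by_cases hw : w ∈ ball z (r * ρ z)
    · calc β z w ≤ C₁ * t := hin z w hw
        _ ≤ C₁ * (t + 2) ^ (2 : ℝ) := by gcongr; linarith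
    · calc β z w ≤ C₁ * t ^ (2 - δ) := hout z w hw
        _ ≤ C₁ * (t + 2) ^ (2 - δ) := by gcongr; linarith
        _ ≤ C₁ * (t + 2) ^ (2 : ℝ) := by gcongr <;> linarith
  linarith

lemma exists_integrand_le (hρ : ∀ z, 0 < ρ z) (hC₀ : 0 < C₀) (hθ : 0 < θ + 1)
    (hρ₂ : ∀ (z w : ℂ) (r : ℝ), 1 < r → w ∈ ball z (r * ρ z) → (C₀ * r ^ θ)⁻¹ ≤ ρ w / ρ z)
    {β : ℂ → ℂ → ℝ} {C₁ δ r : ℝ} (hβ : ∀ z w, 0 ≤ β z w)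
    (hC₁ : 0 ≤ C₁) (hδ : 0 ≤ δ) (hδ₂ : δ ≤ 2)
    (hin : ∀ z w : ℂ, w ∈ ball z (r * ρ z) → β z w ≤ C₁ * (‖z - w‖ / ρ z))
    (hout : ∀ z w : ℂ, w ∉ ball z (r * ρ z) → β z w ≤ C₁ * (‖z - w‖ / ρ z) ^ (2 - δ))
    {φ : ℂ → ℝ} {K : ℂ → ℂ → ℂ} {C ε : ℝ} (hC : 0 < C) (hε : 0 < ε)
    (hK : ∀ w z : ℂ, ‖K w z‖ ≤ C * (Real.exp (φ w + φ z) / (ρ w * ρ z)) *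
      Real.exp (-((‖z - w‖ / ρ z) ^ ε))) {p : ℝ} (hp : 0 < p) (l : ℝ) :
    ∃ A m b e : ℝ, 0 < A ∧ 0 < b ∧ 0 < e ∧ ∀ z ξ : ℂ,
      (β z ξ + 1) ^ l * ‖K z ξ‖ ^ p * Real.exp (-(p * φ ξ)) ≤
        A * ρ z ^ (-(2 * p)) * Real.exp (p * φ z) *
          ((‖z - ξ‖ / ρ z + 2) ^ m * Real.exp (-(b * (‖z - ξ‖ / ρ z) ^ e))) := by
  set b := (4 ^ ε * C₀ ^ (ε / (θ + 1)))⁻¹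
  set L := max l 0
  refine ⟨(C₁ + 1) ^ L * (C * C₀ * Real.exp 1) ^ p, 2 * L + θ * p, p * b, ε / (θ + 1),
    by positivity, by positivity, by positivity, fun z ξ => ?_⟩
  set t := ‖z - ξ‖ / ρ z
  have ht : 0 ≤ t := div_nonneg (norm_nonneg _) (hρ z).le
  have hβl : (β z ξ + 1) ^ l ≤ ((C₁ + 1) * (t + 2) ^ (2 : ℝ)) ^ L :=
    Real.rpow_le_rpow_max_zero (by linarith [hβ z ξ])
      (add_one_le_mul_add_two_rpow_two hρ hC₁ hδ hδ₂ hin hout z ξ) l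
  have hKp := Real.rpow_le_rpow (norm_nonneg _)
    (norm_kernel_le hρ hC₀ hθ hρ₂ hC.le hε.le hK z ξ) hp.le
  calc (β z ξ + 1) ^ l * ‖K z ξ‖ ^ p * Real.exp (-(p * φ ξ))
      ≤ ((C₁ + 1) * (t + 2) ^ (2 : ℝ)) ^ L *
          (C * C₀ * Real.exp 1 * Real.exp (φ z + φ ξ) * ρ z ^ (-2 : ℝ) * (t + 2) ^ θ *
            Real.exp (-(b * t ^ (ε / (θ + 1))))) ^ p * Real.exp (-(p * φ ξ)) := by
        gcongr
    _ = _ := by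
        have := hρ z
        simp (disch := positivity) only [Real.mul_rpow, ← Real.rpow_mul, ← Real.exp_mul]
        rw [Real.rpow_add (by positivity), show p * φ z = (φ z + φ ξ) * p + -(p * φ ξ) by ring,
          Real.exp_add, show -(p * b * t ^ (ε / (θ + 1))) = -(b * t ^ (ε / (θ + 1))) * p by ring,
          show -(2 * p) = -2 * p by ring]
        ring

end Weight

theorem stmt4_general
    (ρ : ℂ → ℝ) (hρ : ∀ z, 0 < ρ z)
    (C₀ θ : ℝ) (hC₀ : 0 < C₀) (hθ : 0 < θ)
    (hρ₂ : ∀ (z w : ℂ) (r : ℝ), 1 < r → w ∈ Metric.ball z (r * ρ z) →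
      (C₀ * r ^ θ)⁻¹ ≤ ρ w / ρ z ∧ ρ w / ρ z ≤ C₀ * r ^ θ)
    (β : ℂ → ℂ → ℝ)
    (hβnonneg : ∀ z w, 0 ≤ β z w)
    (δ : ℝ) (hδ : 0 < δ ∧ δ < 1)
    (hβ : ∀ r : ℝ, 0 < r → ∃ Cr : ℝ, 0 < Cr ∧
      (∀ z w : ℂ, w ∈ Metric.ball z (r * ρ z) →
        Cr⁻¹ * (‖z - w‖ / ρ z) ≤ β z w ∧
        β z w ≤ Cr * (‖z - w‖ / ρ z)) ∧
      (∀ z w : ℂ, w ∉ Metric.ball z (r * ρ z) →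
        Cr⁻¹ * (‖z - w‖ / ρ z) ^ δ ≤ β z w ∧
        β z w ≤ Cr * (‖z - w‖ / ρ z) ^ (2 - δ)))
    (φ : ℂ → ℝ)
    (K : ℂ → ℂ → ℂ)
    (hK : ∃ C : ℝ, 0 < C ∧ ∃ ε : ℝ, 0 < ε ∧ ∀ w z : ℂ,
      ‖K w z‖ ≤ C * (Real.exp (φ w + φ z) / (ρ w * ρ z)) *
        Real.exp (-((‖z - w‖ / ρ z) ^ ε)))
    (p l : ℝ) (hp : 0 < p) :
    ∃ C : ℝ, 0 < C ∧ ∀ z : ℂ,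
      (∫⁻ ξ : ℂ, ENNReal.ofReal ((β z ξ + 1) ^ l * ‖K z ξ‖ ^ p *
          Real.exp (-(p * φ ξ)))) ≤
        ENNReal.ofReal (C * ρ z ^ (2 * (1 - p)) * Real.exp (p * φ z)) := by
  obtain ⟨C, hC, ε, hε, hKb⟩ := hK
  obtain ⟨C₁, hC₁, hβin, hβout⟩ := hβ 1 one_pos
  obtain ⟨A, m, b, e, hA, hb, he, hbound⟩ :=
    exists_integrand_le hρ hC₀ (by linarith) (fun z w r hr hw => (hρ₂ z w r hr hw).1)
      hβnonneg hC₁.le hδ.1.le (by linarith [hδ.2]) (fun z w hw => (hβin z w hw).2)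
      (fun z w hw => (hβout z w hw).2) hC hε hKb hp l
  obtain ⟨J, hJ, hint⟩ := exists_lintegral_le_of_le_mul_decay (volume : Measure ℂ) m hb he
  refine ⟨J * A, by positivity, fun z => ?_⟩
  have hρz := hρ z
  calc (∫⁻ ξ : ℂ, ENNReal.ofReal ((β z ξ + 1) ^ l * ‖K z ξ‖ ^ p * Real.exp (-(p * φ ξ))))
      ≤ ENNReal.ofReal
          (J * ρ z ^ Module.finrank ℝ ℂ * (A * ρ z ^ (-(2 * p)) * Real.exp (p * φ z))) :=
        hint _ z hρz (by positivity) (hbound z)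
    _ = ENNReal.ofReal (J * A * ρ z ^ (2 * (1 - p)) * Real.exp (p * φ z)) := by
        rw [Complex.finrank_real_complex, ← Real.rpow_natCast,
          show 2 * (1 - p) = ((2 : ℕ) : ℝ) + -(2 * p) by push_cast; ring, Real.rpow_add hρz]
        ring_nf

/-- For every `p > 0` and `l ∈ ℝ` there is `C > 0` such that
`∫_ℂ (β(z,ξ)+1)^l |K(z,ξ)|^p e^{-pφ(ξ)} dA(ξ) ≤ C ρ(z)^{2(1-p)} e^{pφ(z)}` for all `z`. -/
theorem stmt4
    (ρ : ℂ → ℝ) (hρ : ∀ z, 0 < ρ z)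
    (C₀ θ : ℝ) (hC₀ : 0 < C₀) (hθ : 0 < θ)
    (hρ₁ : ∀ (z w : ℂ) (r : ℝ), 0 < r → r ≤ 1 → w ∈ Metric.ball z (r * ρ z) →
      C₀⁻¹ ≤ ρ w / ρ z ∧ ρ w / ρ z ≤ C₀)
    (hρ₂ : ∀ (z w : ℂ) (r : ℝ), 1 < r → w ∈ Metric.ball z (r * ρ z) →
      (C₀ * r ^ θ)⁻¹ ≤ ρ w / ρ z ∧ ρ w / ρ z ≤ C₀ * r ^ θ)
    (β : ℂ → ℂ → ℝ)
    (hβsymm : ∀ z w, β z w = β w z) (hβnonneg : ∀ z w, 0 ≤ β z w)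
    (hβeq : ∀ z w, β z w = 0 ↔ z = w)
    (hβtri : ∀ z w u, β z u ≤ β z w + β w u)
    (δ : ℝ) (hδ : 0 < δ ∧ δ < 1)
    (hβ : ∀ r : ℝ, 0 < r → ∃ Cr : ℝ, 0 < Cr ∧
      (∀ z w : ℂ, w ∈ Metric.ball z (r * ρ z) →
        Cr⁻¹ * (‖z - w‖ / ρ z) ≤ β z w ∧
        β z w ≤ Cr * (‖z - w‖ / ρ z)) ∧
      (∀ z w : ℂ, w ∉ Metric.ball z (r * ρ z) →
        Cr⁻¹ * (‖z - w‖ / ρ z) ^ δ ≤ β z w ∧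
        β z w ≤ Cr * (‖z - w‖ / ρ z) ^ (2 - δ)))
    (φ : ℂ → ℝ) (hφm : Measurable φ)
    (K : ℂ → ℂ → ℂ)
    (hK : ∃ C : ℝ, 0 < C ∧ ∃ ε : ℝ, 0 < ε ∧ ∀ w z : ℂ,
      ‖K w z‖ ≤ C * (Real.exp (φ w + φ z) / (ρ w * ρ z)) *
        Real.exp (-((‖z - w‖ / ρ z) ^ ε)))
    (p l : ℝ) (hp : 0 < p) :
    ∃ C : ℝ, 0 < C ∧ ∀ z : ℂ,
      (∫⁻ ξ : ℂ, ENNReal.ofReal ((β z ξ + 1) ^ l * ‖K z ξ‖ ^ p *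
          Real.exp (-(p * φ ξ)))) ≤
        ENNReal.ofReal (C * ρ z ^ (2 * (1 - p)) * Real.exp (p * φ z)) :=
  stmt4_general ρ hρ C₀ θ hC₀ hθ hρ₂ β hβnonneg δ hδ hβ φ K hK p l hp
end

section
/- For every s ∈ ℝ there exist constants C₁, C₂ > 0 such that C₁ ρ(z)^{s−2} e^{φ(z)} ≤ sup_{w∈ℂ} ρ(w)^s |K(w,z)| e^{−φ(w)} ≤ C₂ ρ(z)^{s−2} e^{φ(z)} for all z ∈ ℂ. -/
/-! The lower bound is the diagonal term `w = z`. For the upper bound, the growth condition on `ρ`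
at radius `r = |z - w| / ρ(z) + 2` bounds `(ρ(w) / ρ(z))^(s-1)` by a power of `|z - w| / ρ(z)`,
and the factor `exp (-(|z - w| / ρ(z))^ε)` of the kernel estimate absorbs any such power. -/

open Real Metric Set

lemma rpow_le_factorial_ceil_mul_exp {x : ℝ} (hx : 1 ≤ x) (q : ℝ) :
    x ^ q ≤ (⌈q⌉₊).factorial * exp x :=
  calc x ^ q ≤ x ^ (⌈q⌉₊ : ℝ) := rpow_le_rpow_of_exponent_le hx (Nat.le_ceil q)
    _ = x ^ ⌈q⌉₊ := rpow_natCast x _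
    _ ≤ (⌈q⌉₊).factorial * exp x :=
      (div_le_iff₀' (by positivity)).1 (pow_div_factorial_le_exp x (by linarith) _)

lemma add_two_le_three_mul_one_add_rpow_rpow_inv {t ε : ℝ} (ht : 0 ≤ t) (hε : 0 < ε) :
    t + 2 ≤ 3 * (1 + t ^ ε) ^ ε⁻¹ := by
  have hu : 0 ≤ t ^ ε := rpow_nonneg ht ε
  have h_one : 1 ≤ (1 + t ^ ε) ^ ε⁻¹ := one_le_rpow (by linarith) (by positivity)
  have h_t : t ≤ (1 + t ^ ε) ^ ε⁻¹ :=
    calc t = (t ^ ε) ^ ε⁻¹ := (rpow_rpow_inv ht hε.ne').symm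
      _ ≤ (1 + t ^ ε) ^ ε⁻¹ := rpow_le_rpow hu (by linarith) (by positivity)
  linarith

lemma exists_add_two_rpow_mul_exp_neg_rpow_le {a ε : ℝ} (ha : 0 ≤ a) (hε : 0 < ε) :
    ∃ M, 0 < M ∧ ∀ t, 0 ≤ t → (t + 2) ^ a * exp (-t ^ ε) ≤ M := by
  refine ⟨3 ^ a * (⌈a / ε⌉₊).factorial * exp 1, by positivity, fun t ht => ?_⟩
  have hu : 0 ≤ t ^ ε := rpow_nonneg ht ε
  calc (t + 2) ^ a * exp (-t ^ ε)
      ≤ (3 * (1 + t ^ ε) ^ ε⁻¹) ^ a * exp (-t ^ ε) := by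
        gcongr
        exact add_two_le_three_mul_one_add_rpow_rpow_inv ht hε
    _ = 3 ^ a * (1 + t ^ ε) ^ (a / ε) * exp (-t ^ ε) := by
        rw [mul_rpow (by norm_num) (by positivity), ← rpow_mul (by positivity), inv_mul_eq_div]
    _ ≤ 3 ^ a * ((⌈a / ε⌉₊).factorial * exp (1 + t ^ ε)) * exp (-t ^ ε) := by
        gcongr
        exact rpow_le_factorial_ceil_mul_exp (by linarith) _
    _ = 3 ^ a * (⌈a / ε⌉₊).factorial * exp 1 := by
        rw [exp_add, exp_neg]
        field_simp

lemma rpow_le_rpow_abs_of_inv_le_of_le_s6 {x Q : ℝ} (hx : 0 < x) (hQx : Q⁻¹ ≤ x) (hxQ : x ≤ Q)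
    (p : ℝ) : x ^ p ≤ Q ^ |p| := by
  have hQ : 0 < Q := hx.trans_le hxQ
  rcases le_total 0 p with hp | hp
  · rw [abs_of_nonneg hp]
    exact rpow_le_rpow hx.le hxQ hp
  · calc x ^ p ≤ Q⁻¹ ^ p := rpow_le_rpow_of_nonpos (by positivity) hQx hp
      _ = Q ^ |p| := by rw [abs_of_nonpos hp, inv_rpow hQ.le, ← rpow_neg hQ.le]

section WeightedKernel

variable {ρ : ℂ → ℝ} {C₀ θ : ℝ}

lemma div_rpow_le_of_ratio_bound (hρ : ∀ z, 0 < ρ z) (hC₀ : 0 < C₀)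
    (hρ₂ : ∀ (z w : ℂ) (r : ℝ), 1 < r → w ∈ ball z (r * ρ z) →
      (C₀ * r ^ θ)⁻¹ ≤ ρ w / ρ z ∧ ρ w / ρ z ≤ C₀ * r ^ θ) (z w : ℂ) (p : ℝ) :
    (ρ w / ρ z) ^ p ≤ C₀ ^ |p| * (‖z - w‖ / ρ z + 2) ^ (θ * |p|) := by
  have ht : 0 ≤ ‖z - w‖ / ρ z := div_nonneg (norm_nonneg _) (hρ z).le
  set r := ‖z - w‖ / ρ z + 2
  have hr : 0 ≤ r := by linarith
  have hw : w ∈ ball z (r * ρ z) := by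
    rw [mem_ball, dist_comm, dist_eq_norm, ← div_lt_iff₀ (hρ z)]
    linarith
  obtain ⟨hlo, hhi⟩ := hρ₂ z w r (by linarith) hw
  calc (ρ w / ρ z) ^ p ≤ (C₀ * r ^ θ) ^ |p| :=
        rpow_le_rpow_abs_of_inv_le_of_le_s6 (div_pos (hρ w) (hρ z)) hlo hhi p
    _ = C₀ ^ |p| * r ^ (θ * |p|) := by rw [mul_rpow hC₀.le (rpow_nonneg hr θ), ← rpow_mul hr]

lemma exists_rpow_mul_norm_mul_exp_neg_le (hρ : ∀ z, 0 < ρ z) (hC₀ : 0 < C₀) (hθ : 0 ≤ θ)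
    (hρ₂ : ∀ (z w : ℂ) (r : ℝ), 1 < r → w ∈ ball z (r * ρ z) →
      (C₀ * r ^ θ)⁻¹ ≤ ρ w / ρ z ∧ ρ w / ρ z ≤ C₀ * r ^ θ)
    {φ : ℂ → ℝ} {K : ℂ → ℂ → ℂ} {C ε : ℝ} (hC : 0 < C) (hε : 0 < ε)
    (hK : ∀ w z : ℂ, ‖K w z‖ ≤ C * (exp (φ w + φ z) / (ρ w * ρ z)) *
      exp (-((‖z - w‖ / ρ z) ^ ε))) (s : ℝ) :
    ∃ C₂, 0 < C₂ ∧ ∀ z w,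
      ρ w ^ s * ‖K w z‖ * exp (-φ w) ≤ C₂ * ρ z ^ (s - 2) * exp (φ z) := by
  obtain ⟨M, hM, hMt⟩ :=
    exists_add_two_rpow_mul_exp_neg_rpow_le (mul_nonneg hθ (abs_nonneg (s - 1))) hε
  refine ⟨C * C₀ ^ |s - 1| * M, by positivity, fun z w => ?_⟩
  have hρw := hρ w
  have hρz := hρ z
  set t := ‖z - w‖ / ρ z
  have hratio : (ρ w / ρ z) ^ (s - 1) * exp (-t ^ ε) ≤ C₀ ^ |s - 1| * M :=
    calc (ρ w / ρ z) ^ (s - 1) * exp (-t ^ ε)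
        ≤ C₀ ^ |s - 1| * (t + 2) ^ (θ * |s - 1|) * exp (-t ^ ε) := by
          gcongr
          exact div_rpow_le_of_ratio_bound hρ hC₀ hρ₂ z w _
      _ ≤ C₀ ^ |s - 1| * M := by
          rw [mul_assoc]
          gcongr
          exact hMt t (by positivity)
  calc ρ w ^ s * ‖K w z‖ * exp (-φ w)
      ≤ ρ w ^ s * (C * (exp (φ w + φ z) / (ρ w * ρ z)) * exp (-t ^ ε)) * exp (-φ w) := by
        gcongr
        exact hK w z
    _ = C * ((ρ w / ρ z) ^ (s - 1) * exp (-t ^ ε)) * (ρ z ^ (s - 2) * exp (φ z)) := by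
        simp only [div_rpow hρw.le hρz.le, rpow_sub hρw, rpow_sub hρz, rpow_one, rpow_two,
          exp_add, exp_neg (φ w)]
        field_simp
    _ ≤ C * (C₀ ^ |s - 1| * M) * (ρ z ^ (s - 2) * exp (φ z)) := by gcongr
    _ = C * C₀ ^ |s - 1| * M * ρ z ^ (s - 2) * exp (φ z) := by ring

end WeightedKernel

theorem stmt6_general
    (ρ : ℂ → ℝ) (hρ : ∀ z, 0 < ρ z)
    (C₀ θ : ℝ) (hC₀ : 0 < C₀) (hθ : 0 < θ)
    (hρ₂ : ∀ (z w : ℂ) (r : ℝ), 1 < r → w ∈ Metric.ball z (r * ρ z) →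
      (C₀ * r ^ θ)⁻¹ ≤ ρ w / ρ z ∧ ρ w / ρ z ≤ C₀ * r ^ θ)
    (φ : ℂ → ℝ)
    (K : ℂ → ℂ → ℂ)
    (hK : ∃ C : ℝ, 0 < C ∧ ∃ ε : ℝ, 0 < ε ∧ ∀ w z : ℂ,
      ‖K w z‖ ≤ C * (Real.exp (φ w + φ z) / (ρ w * ρ z)) *
        Real.exp (-((‖z - w‖ / ρ z) ^ ε)))
    (hK_low : ∃ r₀ : ℝ, 0 < r₀ ∧ ∃ c : ℝ, 0 < c ∧ ∀ z w : ℂ,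
      w ∈ Metric.ball z (r₀ * ρ z) →
        c * (Real.exp (φ w + φ z) / ρ z ^ (2 : ℝ)) ≤ ‖K w z‖)
    (s : ℝ) :
    ∃ C₁ C₂ : ℝ, 0 < C₁ ∧ 0 < C₂ ∧ ∀ z : ℂ,
      C₁ * ρ z ^ (s - 2) * Real.exp (φ z) ≤
        (⨆ w : ℂ, ρ w ^ s * ‖K w z‖ * Real.exp (-φ w)) ∧
      (⨆ w : ℂ, ρ w ^ s * ‖K w z‖ * Real.exp (-φ w)) ≤
        C₂ * ρ z ^ (s - 2) * Real.exp (φ z) := by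
  obtain ⟨C, hC, ε, hε, hK⟩ := hK
  obtain ⟨r₀, hr₀, c, hc, hK_low⟩ := hK_low
  obtain ⟨C₂, hC₂, hupper⟩ := exists_rpow_mul_norm_mul_exp_neg_le hρ hC₀ hθ.le hρ₂ hC hε hK s
  refine ⟨c, C₂, hc, hC₂, fun z => ⟨?_, ciSup_le (hupper z)⟩⟩
  have hρz := hρ z
  have hdiag := hK_low z z (mem_ball_self (by positivity))
  calc c * ρ z ^ (s - 2) * exp (φ z)
      = ρ z ^ s * (c * (exp (φ z + φ z) / ρ z ^ (2 : ℝ))) * exp (-φ z) := by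
        rw [rpow_sub hρz, exp_add, exp_neg]
        field_simp
    _ ≤ ρ z ^ s * ‖K z z‖ * exp (-φ z) := by gcongr
    _ ≤ ⨆ w, ρ w ^ s * ‖K w z‖ * exp (-φ w) :=
        le_ciSup ⟨_, forall_mem_range.2 (hupper z)⟩ z

/-- For every `s ∈ ℝ` there are `C₁, C₂ > 0` such that
`C₁ ρ(z)^{s-2} e^{φ(z)} ≤ sup_w ρ(w)^s |K(w,z)| e^{-φ(w)} ≤ C₂ ρ(z)^{s-2} e^{φ(z)}`
for all `z ∈ ℂ`. -/
theorem stmt6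
    (ρ : ℂ → ℝ) (hρ : ∀ z, 0 < ρ z)
    (C₀ θ : ℝ) (hC₀ : 0 < C₀) (hθ : 0 < θ)
    (hρ₁ : ∀ (z w : ℂ) (r : ℝ), 0 < r → r ≤ 1 → w ∈ Metric.ball z (r * ρ z) →
      C₀⁻¹ ≤ ρ w / ρ z ∧ ρ w / ρ z ≤ C₀)
    (hρ₂ : ∀ (z w : ℂ) (r : ℝ), 1 < r → w ∈ Metric.ball z (r * ρ z) →
      (C₀ * r ^ θ)⁻¹ ≤ ρ w / ρ z ∧ ρ w / ρ z ≤ C₀ * r ^ θ)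
    (φ : ℂ → ℝ) (hφm : Measurable φ)
    (K : ℂ → ℂ → ℂ)
    (hK : ∃ C : ℝ, 0 < C ∧ ∃ ε : ℝ, 0 < ε ∧ ∀ w z : ℂ,
      ‖K w z‖ ≤ C * (Real.exp (φ w + φ z) / (ρ w * ρ z)) *
        Real.exp (-((‖z - w‖ / ρ z) ^ ε)))
    (hK_low : ∃ r₀ : ℝ, 0 < r₀ ∧ ∃ c : ℝ, 0 < c ∧ ∀ z w : ℂ,
      w ∈ Metric.ball z (r₀ * ρ z) →
        c * (Real.exp (φ w + φ z) / ρ z ^ (2 : ℝ)) ≤ ‖K w z‖)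
    (s : ℝ) :
    ∃ C₁ C₂ : ℝ, 0 < C₁ ∧ 0 < C₂ ∧ ∀ z : ℂ,
      C₁ * ρ z ^ (s - 2) * Real.exp (φ z) ≤
        (⨆ w : ℂ, ρ w ^ s * ‖K w z‖ * Real.exp (-φ w)) ∧
      (⨆ w : ℂ, ρ w ^ s * ‖K w z‖ * Real.exp (-φ w)) ≤
        C₂ * ρ z ^ (s - 2) * Real.exp (φ z) :=
  stmt6_general ρ hρ C₀ θ hC₀ hθ hρ₂ φ K hK hK_low s
end

section
/- For every R > 0 and every ε > 0 there exists a function h : ℂ → ℝ with compact support such that h(z) = 1 for all z ∈ B(0,R), 0 ≤ h ≤ 1 on ℂ with sup_{z∈ℂ} |h(z)| = 1, and sup_{z∈ℂ} ω(h)(z) < ε. -/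
/-!
Take `h = clamp₀₁ (1 - (ε/2) (β(0,z) - R))`. By the triangle inequality `z ↦ β(0,z)` is
1-Lipschitz for `β`, so `h` is `ε/2`-Lipschitz for `β` and its oscillation is at most `ε/2`.
It equals `1` on `B(0,R)` and vanishes outside `B(0, R + 2/ε)`, which is bounded because
`β(0,z) ≳ (|z|/ρ(0))^δ` far from `0`.
-/

open MeasureTheory Filter Metric Set
open scoped ENNReal

/-- The oscillation `ω(h)(z) = sup{ |h(z) - h(w)| : β(z,w) < 1 }` of a real-valued
function `h` at `z`. -/
noncomputable def omegaR (β : ℂ → ℂ → ℝ) (h : ℂ → ℝ) (z : ℂ) : ℝ :=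
  sSup ((fun w => |h z - h w|) '' {w : ℂ | β z w < 1})

lemma abs_min_one_max_zero_sub_le (a b : ℝ) :
    |min 1 (max 0 a) - min 1 (max 0 b)| ≤ |a - b| := by
  refine (abs_min_sub_min_le_max 1 (max 0 a) 1 (max 0 b)).trans ?_
  rw [sub_self, abs_zero]
  refine max_le (abs_nonneg _) ?_
  simpa only [max_comm] using abs_max_sub_max_le_abs a b 0

noncomputable def rampCutoff {X : Type*} (f : X → ℝ) (R s : ℝ) (x : X) : ℝ :=
  min 1 (max 0 (1 - s * (f x - R)))

section rampCutoff

variable {X : Type*} (f : X → ℝ) (R : ℝ) {s : ℝ}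

lemma rampCutoff_nonneg (x : X) : 0 ≤ rampCutoff f R s x :=
  le_min zero_le_one (le_max_left _ _)

lemma rampCutoff_le_one (x : X) : rampCutoff f R s x ≤ 1 :=
  min_le_left _ _

lemma rampCutoff_eq_one (hs : 0 ≤ s) {x : X} (hx : f x ≤ R) : rampCutoff f R s x = 1 :=
  min_eq_left (le_max_of_le_right (by nlinarith))

lemma support_rampCutoff_subset (hs : 0 < s) :
    Function.support (rampCutoff f R s) ⊆ {x | f x < R + s⁻¹} := by
  intro x hx
  by_contra hfar
  have hneg : 1 - s * (f x - R) ≤ 0 := by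
    have : 1 ≤ s * (f x - R) := by
      rw [← div_le_iff₀' hs, one_div]
      linarith [not_lt.1 (show ¬f x < R + s⁻¹ from hfar)]
    linarith
  exact hx (by rw [rampCutoff, max_eq_left hneg, min_eq_right zero_le_one])

lemma abs_rampCutoff_sub_le (hs : 0 ≤ s) (x y : X) :
    |rampCutoff f R s x - rampCutoff f R s y| ≤ s * |f x - f y| := by
  refine (abs_min_one_max_zero_sub_le _ _).trans_eq ?_
  rw [show 1 - s * (f x - R) - (1 - s * (f y - R)) = -(s * (f x - f y)) by ring,
    abs_neg, abs_mul, abs_of_nonneg hs]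

end rampCutoff

lemma abs_sub_le_of_triangle {X : Type*} {β : X → X → ℝ} (hsymm : ∀ x y, β x y = β y x)
    (htri : ∀ x y z, β x z ≤ β x y + β y z) (a x y : X) :
    |β a x - β a y| ≤ β x y := by
  rw [abs_sub_le_iff]
  constructor
  · linarith [htri a y x, hsymm x y]
  · linarith [htri a x y]

lemma omegaR_le_of_forall_abs_sub_le {β : ℂ → ℂ → ℝ} {h : ℂ → ℝ} {L : ℝ} (hL : 0 ≤ L)
    (hh : ∀ z w, |h z - h w| ≤ L * β z w) (z : ℂ) : omegaR β h z ≤ L := by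
  refine Real.sSup_le ?_ hL
  rintro _ ⟨w, hw, rfl⟩
  calc |h z - h w| ≤ L * β z w := hh z w
    _ ≤ L * 1 := by gcongr; exact le_of_lt hw
    _ = L := mul_one L

lemma iSup_abs_eq_one {X : Type*} {h : X → ℝ} (h0 : ∀ x, 0 ≤ h x) (h1 : ∀ x, h x ≤ 1)
    {x₀ : X} (hx₀ : h x₀ = 1) : ⨆ x, |h x| = 1 := by
  have : Nonempty X := ⟨x₀⟩
  have habs : ∀ x, |h x| ≤ 1 := fun x => (abs_of_nonneg (h0 x)).trans_le (h1 x)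
  refine le_antisymm (ciSup_le habs) ?_
  calc (1 : ℝ) = |h x₀| := by rw [hx₀, abs_one]
    _ ≤ ⨆ x, |h x| := le_ciSup (f := fun x => |h x|) ⟨1, by rintro _ ⟨x, rfl⟩; exact habs x⟩ x₀

lemma isBounded_setOf_lt_of_rpow_le {E : Type*} [SeminormedAddCommGroup E] {g : E → ℝ}
    {r C δ : ℝ} (hr : 0 < r) (hC : 0 < C) (hδ : 0 < δ)
    (hg : ∀ z, r ≤ ‖z‖ → C⁻¹ * (‖z‖ / r) ^ δ ≤ g z) (S : ℝ) :
    Bornology.IsBounded {z | g z < S} := by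
  refine isBounded_iff_forall_norm_le.2 ⟨max r (r * (C * S) ^ δ⁻¹), fun z hz => ?_⟩
  rcases lt_or_ge ‖z‖ r with hnear | hfar
  · exact hnear.le.trans (le_max_left _ _)
  have hratio : 0 ≤ ‖z‖ / r := by positivity
  have hpow : (‖z‖ / r) ^ δ ≤ C * S := by
    have := hg z hfar
    rw [inv_mul_le_iff₀ hC] at this
    nlinarith [show g z < S from hz]
  have hCS : 0 ≤ C * S := (Real.rpow_nonneg hratio δ).trans hpow
  have : ‖z‖ / r ≤ (C * S) ^ δ⁻¹ := (Real.le_rpow_inv_iff_of_pos hratio hCS hδ).2 hpow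
  rw [div_le_iff₀ hr] at this
  linarith [le_max_right r (r * (C * S) ^ δ⁻¹)]

theorem stmt10_general
    (ρ : ℂ → ℝ) (hρ : ∀ z, 0 < ρ z)
    (β : ℂ → ℂ → ℝ)
    (hβsymm : ∀ z w, β z w = β w z)
    (hβeq : ∀ z w, β z w = 0 ↔ z = w)
    (hβtri : ∀ z w u, β z u ≤ β z w + β w u)
    (δ : ℝ) (hδ : 0 < δ ∧ δ < 1)
    (hβ : ∀ r : ℝ, 0 < r → ∃ Cr : ℝ, 0 < Cr ∧
      (∀ z w : ℂ, w ∈ Metric.ball z (r * ρ z) →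
        Cr⁻¹ * (‖z - w‖ / ρ z) ≤ β z w ∧
        β z w ≤ Cr * (‖z - w‖ / ρ z)) ∧
      (∀ z w : ℂ, w ∉ Metric.ball z (r * ρ z) →
        Cr⁻¹ * (‖z - w‖ / ρ z) ^ δ ≤ β z w ∧
        β z w ≤ Cr * (‖z - w‖ / ρ z) ^ (2 - δ)))
    (R ε : ℝ) (hR : 0 < R) (hε : 0 < ε) :
    ∃ h : ℂ → ℝ, HasCompactSupport h ∧
      (∀ z : ℂ, β 0 z < R → h z = 1) ∧
      (∀ z : ℂ, 0 ≤ h z ∧ h z ≤ 1) ∧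
      (⨆ z : ℂ, |h z|) = 1 ∧
      (⨆ z : ℂ, omegaR β h z) < ε := by
  have hs : 0 < ε / 2 := half_pos hε
  set h := rampCutoff (β 0) R (ε / 2)
  have hlip : ∀ z w, |h z - h w| ≤ ε / 2 * β z w := fun z w =>
    (abs_rampCutoff_sub_le _ _ hs.le z w).trans
      (mul_le_mul_of_nonneg_left (abs_sub_le_of_triangle hβsymm hβtri 0 z w) hs.le)
  obtain ⟨C, hC, -, hfar⟩ := hβ 1 one_pos
  have hbdd := isBounded_setOf_lt_of_rpow_le (hρ 0) hC hδ.1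
    (fun z hz => by simpa using (hfar 0 z (by simpa using hz)).1) (R + (ε / 2)⁻¹)
  have hone : ∀ z, β 0 z ≤ R → h z = 1 := fun z => rampCutoff_eq_one _ _ hs.le
  refine ⟨h, (hbdd.subset (support_rampCutoff_subset _ _ hs)).isCompact_closure,
    fun z hz => hone z hz.le, fun z => ⟨rampCutoff_nonneg _ _ z, rampCutoff_le_one _ _ z⟩,
    iSup_abs_eq_one (rampCutoff_nonneg _ _) (rampCutoff_le_one _ _)
      (hone 0 ((hβeq 0 0).2 rfl ▸ hR.le)), ?_⟩
  calc ⨆ z, omegaR β h z ≤ ε / 2 := ciSup_le (omegaR_le_of_forall_abs_sub_le hs.le hlip)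
    _ < ε := half_lt_self hε

/-- For every `R > 0` and `ε > 0` there is a compactly supported function
`h : ℂ → ℝ` with `h ≡ 1` on `B(0,R)`, `0 ≤ h ≤ 1`, `sup |h| = 1` and `sup_z ω(h)(z) < ε`. -/
theorem stmt10
    (ρ : ℂ → ℝ) (hρ : ∀ z, 0 < ρ z)
    (C₀ θ : ℝ) (hC₀ : 0 < C₀) (hθ : 0 < θ)
    (hρ₁ : ∀ (z w : ℂ) (r : ℝ), 0 < r → r ≤ 1 → w ∈ Metric.ball z (r * ρ z) →
      C₀⁻¹ ≤ ρ w / ρ z ∧ ρ w / ρ z ≤ C₀)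
    (hρ₂ : ∀ (z w : ℂ) (r : ℝ), 1 < r → w ∈ Metric.ball z (r * ρ z) →
      (C₀ * r ^ θ)⁻¹ ≤ ρ w / ρ z ∧ ρ w / ρ z ≤ C₀ * r ^ θ)
    (β : ℂ → ℂ → ℝ)
    (hβsymm : ∀ z w, β z w = β w z) (hβnonneg : ∀ z w, 0 ≤ β z w)
    (hβeq : ∀ z w, β z w = 0 ↔ z = w)
    (hβtri : ∀ z w u, β z u ≤ β z w + β w u)
    (δ : ℝ) (hδ : 0 < δ ∧ δ < 1)
    (hβ : ∀ r : ℝ, 0 < r → ∃ Cr : ℝ, 0 < Cr ∧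
      (∀ z w : ℂ, w ∈ Metric.ball z (r * ρ z) →
        Cr⁻¹ * (‖z - w‖ / ρ z) ≤ β z w ∧
        β z w ≤ Cr * (‖z - w‖ / ρ z)) ∧
      (∀ z w : ℂ, w ∉ Metric.ball z (r * ρ z) →
        Cr⁻¹ * (‖z - w‖ / ρ z) ^ δ ≤ β z w ∧
        β z w ≤ Cr * (‖z - w‖ / ρ z) ^ (2 - δ)))
    (R ε : ℝ) (hR : 0 < R) (hε : 0 < ε) :
    ∃ h : ℂ → ℝ, HasCompactSupport h ∧
      (∀ z : ℂ, β 0 z < R → h z = 1) ∧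
      (∀ z : ℂ, 0 ≤ h z ∧ h z ≤ 1) ∧
      (⨆ z : ℂ, |h z|) = 1 ∧
      (⨆ z : ℂ, omegaR β h z) < ε :=
  stmt10_general ρ hρ β hβsymm hβeq hβtri δ hδ hβ R ε hR hε
end

section
/- Let 0 < p < ∞ and let f ∈ L^∞(ℂ) have compact support. If (g_j) is a sequence in F^p_φ with sup_j ‖g_j‖_{p,φ} < ∞ that converges to 0 uniformly on every compact subset of ℂ, then ‖f g_j − P(f g_j)‖_{p,φ} → 0 as j → ∞. (This is the key step showing that the Hankel operator H_f is compact from F^p_φ to L^p_φ.) -/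
open MeasureTheory Filter Metric Set
open scoped ENNReal

/-- The Laplacian of a function `φ : ℂ → ℝ`. -/
noncomputable def lap (φ : ℂ → ℝ) (z : ℂ) : ℝ :=
  fderiv ℝ (fun w => fderiv ℝ φ w 1) z 1 +
    fderiv ℝ (fun w => fderiv ℝ φ w Complex.I) z Complex.I

/-- The measure `μ = Δφ dA` on ℂ. -/
noncomputable def muphi (φ : ℂ → ℝ) : Measure ℂ :=
  volume.withDensity fun z => ENNReal.ofReal (lap φ z)

/-- The Bergman projection `P h(z) = ∫_ℂ K(z,w) h(w) e^{-2φ(w)} dA(w)`. -/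
noncomputable def bproj (K : ℂ → ℂ → ℂ) (φ : ℂ → ℝ) (h : ℂ → ℂ) (z : ℂ) : ℂ :=
  ∫ w : ℂ, K z w * h w * (Real.exp (-(2 * φ w)) : ℂ)

/-!
Off the compact set `S = tsupport f` the function `f g_j` vanishes, and on `S` it is at most
`‖f‖_∞ δ_j` with `δ_j = sup_S |g_j| → 0`. The same factor `δ_j` controls `P(f g_j)(z)`, because
`|K(z,w)| e^{-φ(z)-2φ(w)}` decays, for `w ∈ S`, faster than any power of `|z|`: this needs `ρ`
bounded above on `S` and `1/ρ` of polynomial growth, both consequences of the doubling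
condition (the second one through reverse doubling). Hence the `p`-th power of the weighted
norm of `f g_j - P(f g_j)` is at most `δ_j^p ∫ (1 + |z|)^{-3} dA(z)`.
-/

def IsDoubling {E : Type*} [PseudoMetricSpace E] [MeasurableSpace E] (μ : Measure E) (M : ℝ) :
    Prop :=
  ∀ (z : E) (r : ℝ), 0 < r → μ (ball z (2 * r)) ≤ ENNReal.ofReal M * μ (ball z r)

namespace IsDoubling

variable {E : Type*} [MeasurableSpace E] {μ : Measure E} {M : ℝ}

theorem measure_ball_two_pow_mul_le [PseudoMetricSpace E] (hμ : IsDoubling μ M) (k : ℕ) (z : E)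
    {r : ℝ} (hr : 0 < r) : μ (ball z (2 ^ k * r)) ≤ ENNReal.ofReal M ^ k * μ (ball z r) := by
  induction k with
  | zero => simp
  | succ k ih =>
    calc μ (ball z (2 ^ (k + 1) * r)) = μ (ball z (2 * (2 ^ k * r))) := by ring_nf
      _ ≤ ENNReal.ofReal M * μ (ball z (2 ^ k * r)) := hμ z _ (by positivity)
      _ ≤ ENNReal.ofReal M * (ENNReal.ofReal M ^ k * μ (ball z r)) := by gcongr
      _ = ENNReal.ofReal M ^ (k + 1) * μ (ball z r) := by ring

variable [NormedAddCommGroup E] [NormedSpace ℝ E] [Nontrivial E] [OpensMeasurableSpace E]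

/-- Reverse doubling: a ball of radius `r` and a disjoint one at distance `3r` both sit in the
ball of radius `4r`, and doubling twice bounds the first by `M²` times the second. -/
theorem ofReal_mul_measure_ball_le (hμ : IsDoubling μ M) (hM : 0 < M) (z : E) {r : ℝ}
    (hr : 0 < r) : ENNReal.ofReal (1 + (M ^ 2)⁻¹) * μ (ball z r) ≤ μ (ball z (4 * r)) := by
  obtain ⟨v, hv⟩ := exists_norm_eq E (by positivity : (0 : ℝ) ≤ 3 * r)
  set w := z + v
  have hzw : dist z w = 3 * r := by simp [w, dist_eq_norm, hv]
  have hdisj : Disjoint (ball z r) (ball w r) := ball_disjoint_ball (by linarith)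
  have hunion : μ (ball z r) + μ (ball w r) ≤ μ (ball z (4 * r)) := by
    rw [← measure_union hdisj measurableSet_ball]
    refine measure_mono (union_subset (ball_subset_ball (by linarith)) (ball_subset_ball' ?_))
    rw [dist_comm, hzw]; linarith
  have hzw' : μ (ball z r) ≤ ENNReal.ofReal M ^ 2 * μ (ball w r) :=
    calc μ (ball z r) ≤ μ (ball w (2 ^ 2 * r)) :=
          measure_mono (ball_subset_ball' (by rw [hzw]; linarith))
      _ ≤ ENNReal.ofReal M ^ 2 * μ (ball w r) := hμ.measure_ball_two_pow_mul_le 2 w hr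
  have hM2 : ENNReal.ofReal M ^ 2 ≠ 0 := by simp [hM]
  rw [ENNReal.ofReal_add zero_le_one (by positivity), ENNReal.ofReal_one,
    ENNReal.ofReal_inv_of_pos (by positivity), ENNReal.ofReal_pow hM.le, add_mul, one_mul]
  calc μ (ball z r) + (ENNReal.ofReal M ^ 2)⁻¹ * μ (ball z r)
      ≤ μ (ball z r) + μ (ball w r) := by
        gcongr; exact (ENNReal.inv_mul_le_iff hM2 (by simp)).2 hzw'
    _ ≤ μ (ball z (4 * r)) := hunion

theorem ofReal_pow_mul_measure_ball_le (hμ : IsDoubling μ M) (hM : 0 < M) (k : ℕ) (z : E)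
    {r : ℝ} (hr : 0 < r) :
    ENNReal.ofReal (1 + (M ^ 2)⁻¹) ^ k * μ (ball z r) ≤ μ (ball z (4 ^ k * r)) := by
  induction k with
  | zero => simp
  | succ k ih =>
    calc ENNReal.ofReal (1 + (M ^ 2)⁻¹) ^ (k + 1) * μ (ball z r)
        = ENNReal.ofReal (1 + (M ^ 2)⁻¹)
            * (ENNReal.ofReal (1 + (M ^ 2)⁻¹) ^ k * μ (ball z r)) := by ring
      _ ≤ ENNReal.ofReal (1 + (M ^ 2)⁻¹) * μ (ball z (4 ^ k * r)) := by gcongr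
      _ ≤ μ (ball z (4 * (4 ^ k * r))) := hμ.ofReal_mul_measure_ball_le hM z (by positivity)
      _ = μ (ball z (4 ^ (k + 1) * r)) := by ring_nf

variable {ρ : E → ℝ}

theorem le_four_mul_norm_add (hμ : IsDoubling μ M) (hM : 0 < M)
    (hρ : ∀ z, 0 < ρ z ∧ μ (ball z (ρ z)) = 1) (z : E) : ρ z ≤ 4 * (‖z‖ + ρ 0) := by
  by_contra! hlt
  have hr : 0 < ‖z‖ + ρ 0 := by linarith [norm_nonneg z, (hρ 0).1]
  have hθ : 1 < ENNReal.ofReal (1 + (M ^ 2)⁻¹) := by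
    rw [← ENNReal.ofReal_one, ENNReal.ofReal_lt_ofReal_iff (by positivity)]
    linarith [inv_pos.2 (pow_pos hM 2)]
  have hball : 1 ≤ μ (ball z (‖z‖ + ρ 0)) := by
    rw [← (hρ 0).2]
    exact measure_mono (ball_subset_ball' (by rw [dist_zero_left]; linarith))
  refine hθ.not_ge ?_
  calc ENNReal.ofReal (1 + (M ^ 2)⁻¹)
      ≤ ENNReal.ofReal (1 + (M ^ 2)⁻¹) * μ (ball z (‖z‖ + ρ 0)) := le_mul_of_one_le_right' hball
    _ ≤ μ (ball z (4 * (‖z‖ + ρ 0))) := hμ.ofReal_mul_measure_ball_le hM z hr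
    _ ≤ μ (ball z (ρ z)) := measure_mono (ball_subset_ball hlt.le)
    _ = 1 := (hρ z).2

theorem pow_le_pow_of_ball_subset (hμ : IsDoubling μ M) (hM : 0 < M)
    (hρ : ∀ z, 0 < ρ z ∧ μ (ball z (ρ z)) = 1) {z z' : E} {k m : ℕ}
    (hsub : ball z (4 ^ k * ρ z) ⊆ ball z' (2 ^ m * ρ z')) : (1 + (M ^ 2)⁻¹) ^ k ≤ M ^ m := by
  rw [← ENNReal.ofReal_le_ofReal_iff (by positivity), ENNReal.ofReal_pow (by positivity),
    ENNReal.ofReal_pow hM.le]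
  calc ENNReal.ofReal (1 + (M ^ 2)⁻¹) ^ k
      = ENNReal.ofReal (1 + (M ^ 2)⁻¹) ^ k * μ (ball z (ρ z)) := by rw [(hρ z).2, mul_one]
    _ ≤ μ (ball z (4 ^ k * ρ z)) := hμ.ofReal_pow_mul_measure_ball_le hM k z (hρ z).1
    _ ≤ μ (ball z' (2 ^ m * ρ z')) := measure_mono hsub
    _ ≤ ENNReal.ofReal M ^ m * μ (ball z' (ρ z')) :=
        hμ.measure_ball_two_pow_mul_le m z' (hρ z').1
    _ = ENNReal.ofReal M ^ m := by rw [(hρ z').2, mul_one]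

theorem four_pow_le_of_ball_subset (hμ : IsDoubling μ M) (hM : 0 < M)
    (hρ : ∀ z, 0 < ρ z ∧ μ (ball z (ρ z)) = 1) {a : ℕ} (ha : M ≤ (1 + (M ^ 2)⁻¹) ^ a)
    {z z' : E} {k m : ℕ} (hsub : ball z (4 ^ k * ρ z) ⊆ ball z' (2 ^ m * ρ z')) :
    (4 : ℝ) ^ k ≤ ((2 : ℝ) ^ m) ^ (2 * a) := by
  have hkm : k ≤ a * m := by
    rw [← pow_le_pow_iff_right₀ (by linarith [inv_pos.2 (pow_pos hM 2)] : 1 < 1 + (M ^ 2)⁻¹),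
      pow_mul]
    exact (hμ.pow_le_pow_of_ball_subset hM hρ hsub).trans (pow_le_pow_left₀ hM.le ha _)
  calc (4 : ℝ) ^ k ≤ 4 ^ (a * m) := pow_le_pow_right₀ (by norm_num) hkm
    _ = ((2 : ℝ) ^ m) ^ (2 * a) := by
        rw [← pow_mul, show (4 : ℝ) = 2 ^ 2 by norm_num, ← pow_mul]; ring_nf

/-- Around `z` the measure of balls grows at least like `4^k ↦ θ^k`, around `0` at most like
`2^m ↦ M^m`; comparing the two on `B(z, 4^k ρ z) ⊆ B(0, 2^m ρ 0)` makes `1 / ρ z` polynomial. -/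
theorem exists_inv_le_mul_one_add_norm_pow (hμ : IsDoubling μ M) (hM : 0 < M)
    (hρ : ∀ z, 0 < ρ z ∧ μ (ball z (ρ z)) = 1) :
    ∃ (C : ℝ) (N : ℕ), ∀ z, (ρ z)⁻¹ ≤ C * (1 + ‖z‖) ^ N := by
  obtain ⟨a, ha⟩ := pow_unbounded_of_one_lt M
    (by linarith [inv_pos.2 (pow_pos hM 2)] : 1 < 1 + (M ^ 2)⁻¹)
  have hρ0 := (hρ 0).1
  set D : ℝ := 2 * (ρ 0 + 3) / ρ 0
  have hD : 1 ≤ D := by rw [le_div_iff₀ hρ0]; linarith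
  refine ⟨4 * D ^ (2 * a), 2 * a, fun z => ?_⟩
  have hz := norm_nonneg z
  have hρz := (hρ z).1
  set R := ‖z‖ + ρ 0 + 1
  rcases lt_or_ge R (ρ z) with hR | hR
  · calc (ρ z)⁻¹ ≤ 1 := inv_le_one_of_one_le₀ (by linarith)
      _ ≤ 4 * D ^ (2 * a) * (1 + ‖z‖) ^ (2 * a) := by
          have h1 := one_le_pow₀ (n := 2 * a) hD
          have h2 := one_le_pow₀ (n := 2 * a) (by linarith : (1 : ℝ) ≤ 1 + ‖z‖)
          nlinarith
  obtain ⟨k, hk, hk'⟩ := exists_nat_pow_near (x := R / ρ z) (y := (4 : ℝ))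
    (by rw [le_div_iff₀ hρz]; linarith) (by norm_num)
  obtain ⟨m, hm, hm'⟩ := exists_nat_pow_near (x := (‖z‖ + R) / ρ 0) (y := (2 : ℝ))
    (by rw [le_div_iff₀ hρ0]; linarith) (by norm_num)
  rw [le_div_iff₀ hρz] at hk
  rw [le_div_iff₀ hρ0] at hm
  rw [div_lt_iff₀ hρ0] at hm'
  have hsub : ball z (4 ^ k * ρ z) ⊆ ball 0 (2 ^ (m + 1) * ρ 0) :=
    ball_subset_ball' (by rw [dist_zero_right]; linarith)
  have h2m : (2 : ℝ) ^ (m + 1) ≤ D * (1 + ‖z‖) := by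
    rw [pow_succ, show D * (1 + ‖z‖) = 2 * (ρ 0 + 3) * (1 + ‖z‖) / ρ 0 by ring,
      le_div_iff₀ hρ0]
    nlinarith
  calc (ρ z)⁻¹ ≤ R / ρ z := by
        rw [div_eq_mul_inv]; exact le_mul_of_one_le_left (by positivity) (by linarith)
    _ ≤ 4 * 4 ^ k := by rw [← pow_succ']; exact hk'.le
    _ ≤ 4 * ((2 : ℝ) ^ (m + 1)) ^ (2 * a) := by
        gcongr; exact hμ.four_pow_le_of_ball_subset hM hρ ha.le hsub
    _ ≤ 4 * (D * (1 + ‖z‖)) ^ (2 * a) := by gcongr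
    _ = 4 * D ^ (2 * a) * (1 + ‖z‖) ^ (2 * a) := by rw [mul_pow, mul_assoc]

end IsDoubling

open Real

theorem exists_one_add_rpow_mul_exp_neg_rpow_le {a : ℝ} (ha : 0 ≤ a) {b ε : ℝ} (hb : 0 < b)
    (hε : 0 < ε) : ∃ C, ∀ u, 0 ≤ u → (1 + u) ^ a * exp (-(u / b) ^ ε) ≤ C := by
  obtain ⟨n, hn⟩ := exists_nat_ge (a / ε)
  rw [div_le_iff₀ hε] at hn
  refine ⟨(1 + b) ^ a * n.factorial, fun u hu => ?_⟩
  have hv : 0 ≤ (u / b) ^ ε := by positivity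
  rcases le_total u b with hub | hbu
  · calc (1 + u) ^ a * exp (-(u / b) ^ ε) ≤ (1 + b) ^ a * 1 := by
          gcongr
          exact exp_le_one_iff.2 (by linarith)
      _ ≤ (1 + b) ^ a * n.factorial := by
          gcongr; exact_mod_cast Nat.one_le_iff_ne_zero.2 (Nat.factorial_ne_zero n)
  · -- `v ^ n ≤ n! e^v` for `v = (u / b) ^ ε`, and `ε n ≥ a`
    have hx : 1 ≤ u / b := by rwa [le_div_iff₀ hb, one_mul]
    have hpow : ((u / b) ^ ε) ^ n ≤ n.factorial * exp ((u / b) ^ ε) := by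
      have := pow_div_factorial_le_exp _ hv n
      rwa [div_le_iff₀ (by positivity), mul_comm] at this
    calc (1 + u) ^ a * exp (-(u / b) ^ ε)
        ≤ ((1 + b) * (u / b)) ^ a * exp (-(u / b) ^ ε) := by
          gcongr
          rw [add_mul, one_mul, mul_div_cancel₀ _ hb.ne']
          linarith
      _ ≤ (1 + b) ^ a * ((u / b) ^ ε) ^ n * exp (-(u / b) ^ ε) := by
          rw [mul_rpow (by linarith) (by positivity), ← rpow_mul_natCast (by positivity)]
          gcongr
          linarith
      _ ≤ (1 + b) ^ a * (n.factorial * exp ((u / b) ^ ε)) * exp (-(u / b) ^ ε) := by gcongr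
      _ = (1 + b) ^ a * n.factorial := by
          rw [mul_assoc, mul_assoc, ← exp_add, add_neg_cancel, exp_zero, mul_one]

theorem exists_one_add_norm_pow_mul_exp_neg_rpow_le {E : Type*} [SeminormedAddCommGroup E]
    (N : ℕ) {s b ε : ℝ} (hs : 0 ≤ s) (hb : 0 < b) (hε : 0 < ε) (r : ℝ) :
    ∃ C, ∀ z w : E, ‖w‖ ≤ r →
      (1 + ‖z‖) ^ N * exp (-(‖w - z‖ / b) ^ ε) ≤ C * (1 + ‖z‖) ^ (-s) := by
  obtain ⟨C, hC⟩ := exists_one_add_rpow_mul_exp_neg_rpow_le (a := N + s) (by positivity) hb hε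
  refine ⟨(1 + r) ^ ((N : ℝ) + s) * C, fun z w hw => ?_⟩
  have hr : 0 ≤ r := (norm_nonneg w).trans hw
  have hz : (0 : ℝ) < 1 + ‖z‖ := by positivity
  have hzw : 1 + ‖z‖ ≤ (1 + r) * (1 + ‖w - z‖) := by
    nlinarith [norm_le_norm_add_norm_sub' z w, norm_sub_rev z w, norm_nonneg (w - z)]
  calc (1 + ‖z‖) ^ N * exp (-(‖w - z‖ / b) ^ ε)
      = (1 + ‖z‖) ^ ((N : ℝ) + s) * exp (-(‖w - z‖ / b) ^ ε) * (1 + ‖z‖) ^ (-s) := by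
        rw [rpow_add hz, rpow_natCast, rpow_neg hz.le]; field_simp
    _ ≤ ((1 + r) * (1 + ‖w - z‖)) ^ ((N : ℝ) + s) * exp (-(‖w - z‖ / b) ^ ε)
          * (1 + ‖z‖) ^ (-s) := by gcongr
    _ = (1 + r) ^ ((N : ℝ) + s) * ((1 + ‖w - z‖) ^ ((N : ℝ) + s) * exp (-(‖w - z‖ / b) ^ ε))
          * (1 + ‖z‖) ^ (-s) := by
        rw [mul_rpow (by positivity) (by positivity), mul_assoc ((1 + r) ^ _)]
    _ ≤ (1 + r) ^ ((N : ℝ) + s) * C * (1 + ‖z‖) ^ (-s) := by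
        gcongr; exact hC _ (norm_nonneg _)

def HasKernelDecay (K : ℂ → ℂ → ℂ) (φ ρ : ℂ → ℝ) (C ε : ℝ) : Prop :=
  ∀ w z, ‖K w z‖ ≤ C * (exp (φ w + φ z) / (ρ w * ρ z)) * exp (-(‖z - w‖ / ρ z) ^ ε)

theorem exists_norm_kernel_mul_exp_neg_le {φ : ℂ → ℝ} (hφ : Continuous φ) {ρ : ℂ → ℝ}
    (hρ : ∀ z, 0 < ρ z) {Cρ : ℝ} {N : ℕ} (hρ_inv : ∀ z, (ρ z)⁻¹ ≤ Cρ * (1 + ‖z‖) ^ N)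
    {K : ℂ → ℂ → ℂ} {CK ε : ℝ} (hCK : 0 ≤ CK) (hε : 0 < ε)
    (hK : HasKernelDecay K φ ρ CK ε)
    {S : Set ℂ} (hS : IsCompact S) {b : ℝ} (hb : 0 < b) (hρS : ∀ w ∈ S, ρ w ≤ b) {s : ℝ}
    (hs : 0 ≤ s) :
    ∃ C, ∀ z, ∀ w ∈ S, ‖K z w‖ * exp (-(2 * φ w)) * exp (-φ z) ≤ C * (1 + ‖z‖) ^ (-s) := by
  obtain ⟨r, -, hr⟩ := hS.isBounded.exists_pos_norm_le
  obtain ⟨B, hB0, hB⟩ := (hS.image_of_continuousOn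
    (continuous_exp.comp hφ.neg).continuousOn).isBounded.exists_pos_norm_le
  obtain ⟨D, hD⟩ := exists_one_add_norm_pow_mul_exp_neg_rpow_le (E := ℂ) N hs hb hε r
  have hCρ : 0 ≤ Cρ := by simpa using (inv_pos.2 (hρ 0)).le.trans (hρ_inv 0)
  refine ⟨CK * Cρ * (Cρ * (1 + r) ^ N) * B * D, fun z w hw => ?_⟩
  have hρz := hρ_inv z
  have hρw : (ρ w)⁻¹ ≤ Cρ * (1 + r) ^ N := (hρ_inv w).trans (by gcongr; exact hr w hw)
  have hcw : 0 ≤ Cρ * (1 + r) ^ N := (inv_pos.2 (hρ w)).le.trans hρw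
  have hBw : exp (-φ w) ≤ B := by simpa using hB _ (mem_image_of_mem _ hw)
  have hdecay : exp (-(‖w - z‖ / ρ w) ^ ε) ≤ exp (-(‖w - z‖ / b) ^ ε) := by
    gcongr
    · exact hρ w
    · exact hρS w hw
  have hexp : exp (φ z + φ w) * exp (-(2 * φ w)) * exp (-φ z) = exp (-φ w) := by
    rw [← exp_add, ← exp_add]; ring_nf
  calc ‖K z w‖ * exp (-(2 * φ w)) * exp (-φ z)
      ≤ CK * (exp (φ z + φ w) / (ρ z * ρ w)) * exp (-(‖w - z‖ / ρ w) ^ ε)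
        * exp (-(2 * φ w)) * exp (-φ z) := by gcongr; exact hK z w
    _ = CK * (ρ w)⁻¹ * exp (-φ w) * ((ρ z)⁻¹ * exp (-(‖w - z‖ / ρ w) ^ ε)) := by
        rw [← hexp, div_eq_mul_inv, mul_inv]; ring
    _ ≤ CK * (Cρ * (1 + r) ^ N) * B * (Cρ * ((1 + ‖z‖) ^ N * exp (-(‖w - z‖ / b) ^ ε))) := by
        rw [← mul_assoc Cρ]
        have := inv_pos.2 (hρ z)
        gcongr
    _ ≤ CK * (Cρ * (1 + r) ^ N) * B * (Cρ * (D * (1 + ‖z‖) ^ (-s))) := by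
        gcongr _ * (_ * ?_)
        exact hD z w (hr w hw)
    _ = CK * Cρ * (Cρ * (1 + r) ^ N) * B * D * (1 + ‖z‖) ^ (-s) := by ring

theorem exists_norm_mul_exp_neg_le {E F : Type*} [SeminormedAddCommGroup E]
    [SeminormedAddCommGroup F] {φ : E → ℝ} (hφ : Continuous φ) {S : Set E} (hS : IsCompact S)
    {s : ℝ} (hs : 0 ≤ s) :
    ∃ C, ∀ (h : E → F) (η : ℝ), 0 ≤ η → (∀ w ∉ S, h w = 0) → (∀ w ∈ S, ‖h w‖ ≤ η) →
      ∀ z, ‖h z‖ * exp (-φ z) ≤ η * C * (1 + ‖z‖) ^ (-s) := by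
  obtain ⟨r, hr0, hr⟩ := hS.isBounded.exists_pos_norm_le
  obtain ⟨B, hB0, hB⟩ := (hS.image_of_continuousOn
    (continuous_exp.comp hφ.neg).continuousOn).isBounded.exists_pos_norm_le
  refine ⟨B * (1 + r) ^ s, fun h η hη h0 hh z => ?_⟩
  by_cases hz : z ∈ S
  · have hBz : exp (-φ z) ≤ B := by simpa using hB _ (mem_image_of_mem _ hz)
    have hdecay : (1 + r) ^ (-s) ≤ (1 + ‖z‖) ^ (-s) :=
      rpow_le_rpow_of_nonpos (by positivity) (by linarith [hr z hz]) (by linarith)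
    calc ‖h z‖ * exp (-φ z) ≤ η * B := mul_le_mul (hh z hz) hBz (by positivity) hη
      _ = η * (B * (1 + r) ^ s) * (1 + r) ^ (-s) := by
          rw [rpow_neg (by positivity)]; field_simp
      _ ≤ η * (B * (1 + r) ^ s) * (1 + ‖z‖) ^ (-s) := by gcongr
  · rw [h0 z hz, norm_zero, zero_mul]
    positivity

theorem exists_norm_bproj_mul_exp_neg_le {φ : ℂ → ℝ} (hφ : Continuous φ) {ρ : ℂ → ℝ}
    (hρ : ∀ z, 0 < ρ z) {Cρ : ℝ} {N : ℕ} (hρ_inv : ∀ z, (ρ z)⁻¹ ≤ Cρ * (1 + ‖z‖) ^ N)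
    {K : ℂ → ℂ → ℂ} {CK ε : ℝ} (hCK : 0 ≤ CK) (hε : 0 < ε)
    (hK : HasKernelDecay K φ ρ CK ε)
    {S : Set ℂ} (hS : IsCompact S) {b : ℝ} (hb : 0 < b) (hρS : ∀ w ∈ S, ρ w ≤ b) {s : ℝ}
    (hs : 0 ≤ s) :
    ∃ C, ∀ (h : ℂ → ℂ) (η : ℝ), (∀ w ∉ S, h w = 0) → (∀ w ∈ S, ‖h w‖ ≤ η) →
      ∀ z, ‖bproj K φ h z‖ * exp (-φ z) ≤ η * C * (1 + ‖z‖) ^ (-s) := by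
  obtain ⟨C, hC⟩ :=
    exists_norm_kernel_mul_exp_neg_le hφ hρ hρ_inv hCK hε hK hS hb hρS hs
  refine ⟨C * volume.real S, fun h η h0 hh z => ?_⟩
  have hF : ∀ w ∈ S, ‖K z w * h w * (exp (-(2 * φ w)) : ℂ) * (exp (-φ z) : ℂ)‖
      ≤ η * (C * (1 + ‖z‖) ^ (-s)) := by
    intro w hw
    rw [norm_mul, norm_mul, norm_mul, Complex.norm_real, Complex.norm_real,
      norm_of_nonneg (exp_pos _).le, norm_of_nonneg (exp_pos _).le]
    calc ‖K z w‖ * ‖h w‖ * exp (-(2 * φ w)) * exp (-φ z)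
        = ‖h w‖ * (‖K z w‖ * exp (-(2 * φ w)) * exp (-φ z)) := by ring
      _ ≤ η * (C * (1 + ‖z‖) ^ (-s)) :=
          mul_le_mul (hh w hw) (hC z w hw) (by positivity) ((norm_nonneg _).trans (hh w hw))
  calc ‖bproj K φ h z‖ * exp (-φ z)
      = ‖∫ w in S, K z w * h w * (exp (-(2 * φ w)) : ℂ) * (exp (-φ z) : ℂ)‖ := by
        rw [setIntegral_eq_integral_of_forall_compl_eq_zero (fun w hw => by simp [h0 w hw]),
          integral_mul_const, norm_mul, Complex.norm_real, norm_of_nonneg (exp_pos _).le]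
        rfl
    _ ≤ η * (C * (1 + ‖z‖) ^ (-s)) * volume.real S :=
        norm_setIntegral_le_of_norm_le_const hS.measure_lt_top hF
    _ = η * (C * volume.real S) * (1 + ‖z‖) ^ (-s) := by ring

noncomputable def hankel (K : ℂ → ℂ → ℂ) (φ : ℂ → ℝ) (f g : ℂ → ℂ) (z : ℂ) : ℂ :=
  f z * g z - bproj K φ (fun w => f w * g w) z

theorem exists_norm_hankel_mul_exp_neg_le {φ : ℂ → ℝ} (hφ : Continuous φ) {ρ : ℂ → ℝ}
    (hρ : ∀ z, 0 < ρ z) {Cρ : ℝ} {N : ℕ} (hρ_inv : ∀ z, (ρ z)⁻¹ ≤ Cρ * (1 + ‖z‖) ^ N)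
    {K : ℂ → ℂ → ℂ} {CK ε : ℝ} (hCK : 0 ≤ CK) (hε : 0 < ε)
    (hK : HasKernelDecay K φ ρ CK ε)
    {f : ℂ → ℂ} {Mf : ℝ} (hMf : ∀ z, ‖f z‖ ≤ Mf) (hf : HasCompactSupport f) {b : ℝ}
    (hb : 0 < b) (hρS : ∀ w ∈ tsupport f, ρ w ≤ b) {s : ℝ} (hs : 0 ≤ s) :
    ∃ C, 0 ≤ C ∧ ∀ (g : ℂ → ℂ) (δ : ℝ), 0 ≤ δ → (∀ w ∈ tsupport f, ‖g w‖ ≤ δ) →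
      ∀ z, ‖hankel K φ f g z‖ * exp (-φ z) ≤ δ * (C * (1 + ‖z‖) ^ (-s)) := by
  obtain ⟨C₁, hC₁⟩ := exists_norm_mul_exp_neg_le (F := ℂ) hφ hf.isCompact hs
  obtain ⟨C₂, hC₂⟩ :=
    exists_norm_bproj_mul_exp_neg_le hφ hρ hρ_inv hCK hε hK hf.isCompact hb hρS hs
  have hMf0 : 0 ≤ Mf := (norm_nonneg _).trans (hMf 0)
  refine ⟨max (Mf * (C₁ + C₂)) 0, le_max_right _ _, fun g δ hδ hg z => ?_⟩
  set h : ℂ → ℂ := fun w => f w * g w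
  have h0 : ∀ w ∉ tsupport f, h w = 0 := fun w hw => by
    simp [h, image_eq_zero_of_notMem_tsupport hw]
  have hh : ∀ w ∈ tsupport f, ‖h w‖ ≤ Mf * δ := fun w hw => by
    rw [norm_mul]; exact mul_le_mul (hMf w) (hg w hw) (norm_nonneg _) hMf0
  calc ‖hankel K φ f g z‖ * exp (-φ z)
      ≤ ‖h z‖ * exp (-φ z) + ‖bproj K φ h z‖ * exp (-φ z) := by
        rw [← add_mul]; gcongr; exact norm_sub_le _ _
    _ ≤ Mf * δ * C₁ * (1 + ‖z‖) ^ (-s) + Mf * δ * C₂ * (1 + ‖z‖) ^ (-s) :=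
        add_le_add (hC₁ h _ (by positivity) h0 hh z) (hC₂ h _ h0 hh z)
    _ = δ * (Mf * (C₁ + C₂) * (1 + ‖z‖) ^ (-s)) := by ring
    _ ≤ δ * (max (Mf * (C₁ + C₂)) 0 * (1 + ‖z‖) ^ (-s)) := by gcongr; exact le_max_left _ _

theorem lintegral_ofReal_rpow_mul_exp_neg_le {α E : Type*} [MeasurableSpace α]
    [SeminormedAddCommGroup E] (μ : Measure α) {F : α → E} {φ W : α → ℝ} {δ p : ℝ}
    (hδ : 0 < δ) (hp : 0 ≤ p) (hF : ∀ x, ‖F x‖ * exp (-φ x) ≤ δ * W x) :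
    ∫⁻ x, ENNReal.ofReal (‖F x‖ ^ p * exp (-(p * φ x))) ∂μ
      ≤ ENNReal.ofReal (δ ^ p) * ∫⁻ x, ENNReal.ofReal (W x ^ p) ∂μ := by
  rw [← lintegral_const_mul' _ _ ENNReal.ofReal_ne_top]
  refine lintegral_mono fun x => ?_
  have hW : 0 ≤ W x :=
    nonneg_of_mul_nonneg_right ((by positivity : 0 ≤ ‖F x‖ * exp (-φ x)).trans (hF x)) hδ
  rw [← ENNReal.ofReal_mul (by positivity), ← mul_rpow hδ.le hW]
  gcongr
  calc ‖F x‖ ^ p * exp (-(p * φ x)) = (‖F x‖ * exp (-φ x)) ^ p := by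
        rw [mul_rpow (norm_nonneg _) (exp_pos _).le, ← exp_mul]; ring_nf
    _ ≤ (δ * W x) ^ p := rpow_le_rpow (by positivity) (hF x) hp

theorem integrable_mul_one_add_norm_rpow_neg_rpow {E : Type*} [NormedAddCommGroup E]
    [NormedSpace ℝ E] [FiniteDimensional ℝ E] [MeasurableSpace E] [BorelSpace E]
    (μ : Measure E) [μ.IsAddHaarMeasure] {C s p : ℝ} (hC : 0 ≤ C)
    (hsp : Module.finrank ℝ E < s * p) :
    Integrable (fun z => (C * (1 + ‖z‖) ^ (-s)) ^ p) μ := by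
  have h : (fun z : E => (C * (1 + ‖z‖) ^ (-s)) ^ p)
      = fun z => C ^ p * (1 + ‖z‖) ^ (-(s * p)) := by
    funext z
    rw [mul_rpow hC (by positivity), ← rpow_mul (by positivity), neg_mul]
  rw [h]
  exact (integrable_one_add_norm hsp).const_mul _

theorem tendsto_zero_of_forall_eventually_le_ofReal_rpow_mul {ι : Type*} {l : Filter ι}
    {a : ι → ℝ≥0∞} {I : ℝ≥0∞} {p : ℝ} (hp : 0 < p) (hI : I ≠ ⊤)
    (h : ∀ δ > 0, ∀ᶠ j in l, a j ≤ ENNReal.ofReal (δ ^ p) * I) : Tendsto a l (nhds 0) := by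
  have hlim :
      Tendsto (fun δ : ℝ => ENNReal.ofReal (δ ^ p) * I) (nhdsWithin 0 (Ioi 0)) (nhds 0) := by
    have : Tendsto (fun δ : ℝ => δ ^ p) (nhdsWithin 0 (Ioi 0)) (nhds 0) := by
      simpa [zero_rpow hp.ne'] using
        (continuousAt_rpow_const 0 p (Or.inr hp.le)).tendsto.mono_left nhdsWithin_le_nhds
    simpa using ENNReal.Tendsto.mul_const (ENNReal.tendsto_ofReal this) (Or.inr hI)
  refine ENNReal.tendsto_nhds_zero.2 fun e he => ?_
  obtain ⟨δ, hδe, hδ⟩ := ((hlim.eventually (ge_mem_nhds he)).and self_mem_nhdsWithin).exists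
  exact (h δ hδ).mono fun j hj => hj.trans hδe

theorem stmt11_general
    (φ : ℂ → ℝ) (hφ : ContDiff ℝ 2 φ)
    (hdbl : ∃ M : ℝ, 0 < M ∧ ∀ (z : ℂ) (r : ℝ), 0 < r →
      muphi φ (Metric.ball z (2 * r)) ≤ ENNReal.ofReal M * muphi φ (Metric.ball z r))
    (ρ : ℂ → ℝ) (hρ : ∀ z, 0 < ρ z ∧ muphi φ (Metric.ball z (ρ z)) = 1)
    (K : ℂ → ℂ → ℂ)
    (hK_up : ∃ C : ℝ, 0 < C ∧ ∃ ε : ℝ, 0 < ε ∧ ∀ w z : ℂ,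
      ‖K w z‖ ≤ C * (Real.exp (φ w + φ z) / (ρ w * ρ z)) *
        Real.exp (-((‖z - w‖ / ρ z) ^ ε)))
    (p : ℝ) (hp : 0 < p)
    (f : ℂ → ℂ) (hf_bdd : ∃ M : ℝ, ∀ z, ‖f z‖ ≤ M)
    (hf_supp : HasCompactSupport f)
    (g : ℕ → ℂ → ℂ)
    (hg_unif : ∀ S : Set ℂ, IsCompact S → TendstoUniformlyOn g 0 atTop S) :
    Tendsto (fun j => ∫⁻ z : ℂ, ENNReal.ofReal
        (‖f z * g j z - bproj K φ (fun w => f w * g j w) z‖ ^ p *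
          Real.exp (-(p * φ z)))) atTop (nhds 0) := by
  obtain ⟨M, hM, hμ : IsDoubling (muphi φ) M⟩ := hdbl
  obtain ⟨CK, hCK, ε, hε, hK⟩ := hK_up
  obtain ⟨Mf, hMf⟩ := hf_bdd
  obtain ⟨Cρ, N, hρ_inv⟩ := IsDoubling.exists_inv_le_mul_one_add_norm_pow hμ hM hρ
  obtain ⟨r, hr0, hr⟩ := hf_supp.isCompact.isBounded.exists_pos_norm_le
  have hρS : ∀ w ∈ tsupport f, ρ w ≤ 4 * (r + ρ 0) := fun w hw =>
    (hμ.le_four_mul_norm_add hM hρ w).trans (by linarith [hr w hw])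
  obtain ⟨C, hC0, hC⟩ := exists_norm_hankel_mul_exp_neg_le hφ.continuous (fun z => (hρ z).1)
    hρ_inv hCK.le hε hK hMf hf_supp (by linarith [(hρ 0).1]) hρS (s := 3 / p) (by positivity)
  have hI := (integrable_mul_one_add_norm_rpow_neg_rpow volume (s := 3 / p) hC0
    (by rw [Complex.finrank_real_complex, div_mul_cancel₀ _ hp.ne']; norm_num)).lintegral_lt_top
  refine tendsto_zero_of_forall_eventually_le_ofReal_rpow_mul hp hI.ne fun δ hδ => ?_
  filter_upwards [Metric.tendstoUniformlyOn_iff.1 (hg_unif _ hf_supp.isCompact) δ hδ] with j hj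
  exact lintegral_ofReal_rpow_mul_exp_neg_le volume hδ hp.le
    (hC (g j) δ hδ.le fun w hw => by simpa using (hj w hw).le)

/-- If `f ∈ L^∞` has compact support and `(g_j)` is a bounded sequence in
`F^p_φ` converging to `0` uniformly on compact sets, then `‖f g_j - P(f g_j)‖_{p,φ} → 0`. -/
theorem stmt11
    (φ : ℂ → ℝ) (hφ : ContDiff ℝ 2 φ) (hΔpos : ∀ z, 0 ≤ lap φ z)
    (hΔnz : ∃ z, lap φ z ≠ 0)
    (hdbl : ∃ M : ℝ, 0 < M ∧ ∀ (z : ℂ) (r : ℝ), 0 < r →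
      muphi φ (Metric.ball z (2 * r)) ≤ ENNReal.ofReal M * muphi φ (Metric.ball z r))
    (ρ : ℂ → ℝ) (hρ : ∀ z, 0 < ρ z ∧ muphi φ (Metric.ball z (ρ z)) = 1)
    (K : ℂ → ℂ → ℂ)
    (hK_ent : ∀ z, Differentiable ℂ fun w => K w z)
    (hK_L2 : ∀ z, (∫⁻ w : ℂ, ENNReal.ofReal
      (‖K w z‖ ^ (2 : ℕ) * Real.exp (-(2 * φ w)))) < ⊤)
    (hK_conj : ∀ z w, K z w = starRingEnd ℂ (K w z))
    (hK_diag : ∀ z, (K z z).im = 0 ∧ 0 < (K z z).re)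
    (hK_repro : ∀ f : ℂ → ℂ, Differentiable ℂ f →
      (∫⁻ w : ℂ, ENNReal.ofReal
        (‖f w‖ ^ (2 : ℕ) * Real.exp (-(2 * φ w)))) < ⊤ →
      ∀ z : ℂ, f z = ∫ w : ℂ, K z w * f w * (Real.exp (-(2 * φ w)) : ℂ))
    (hK_up : ∃ C : ℝ, 0 < C ∧ ∃ ε : ℝ, 0 < ε ∧ ∀ w z : ℂ,
      ‖K w z‖ ≤ C * (Real.exp (φ w + φ z) / (ρ w * ρ z)) *
        Real.exp (-((‖z - w‖ / ρ z) ^ ε)))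
    (p : ℝ) (hp : 0 < p)
    (f : ℂ → ℂ) (hf_meas : Measurable f) (hf_bdd : ∃ M : ℝ, ∀ z, ‖f z‖ ≤ M)
    (hf_supp : HasCompactSupport f)
    (g : ℕ → ℂ → ℂ) (hg_ent : ∀ j, Differentiable ℂ (g j))
    (hg_bdd : ∃ B : ℝ, ∀ j, (∫⁻ z : ℂ, ENNReal.ofReal
      (‖g j z‖ ^ p * Real.exp (-(p * φ z)))) ≤ ENNReal.ofReal B)
    (hg_unif : ∀ S : Set ℂ, IsCompact S → TendstoUniformlyOn g 0 atTop S) :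
    Tendsto (fun j => ∫⁻ z : ℂ, ENNReal.ofReal
        (‖f z * g j z - bproj K φ (fun w => f w * g j w) z‖ ^ p *
          Real.exp (-(p * φ z)))) atTop (nhds 0) :=
  stmt11_general φ hφ hdbl ρ hρ K hK_up p hp f hf_bdd hf_supp g hg_unif
end

section
/- There is an absolute constant C > 0 (depending only on the data in the context) such that: if f is a continuous function on ℂ with f ∈ VO, then for every ε > 0 there exists a bounded function g : ℂ → ℂ with compact support such that sup_{z∈ℂ} ω(f − g)(z) ≤ C ε. (Consequently, every Hankel operator with VO symbol is approximated in operator norm by Hankel operators with bounded, compactly supported symbols.) -/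
open Filter Metric Set

/-- The oscillation `ω(f)(z) = sup{ |f(z) - f(w)| : β(z,w) < 1 }`. -/
noncomputable def omegaC (β : ℂ → ℂ → ℝ) (f : ℂ → ℂ) (z : ℂ) : ℝ :=
  sSup ((fun w => ‖f z - f w‖) '' {w : ℂ | β z w < 1})

/-!
Off a compact set `K` the oscillation of `f` is below `ε`. Clamping the real and imaginary parts
of `f` to `[-M, M]`, with `M` bounding `|f|` on a `β`-neighbourhood of `K`, gives a bounded `F`
that agrees with `f` near `K` and oscillates by at most `2ε` off `K`. Let `φ` be a cutoff that
equals `1` on `K` and decays linearly in `β(0, ·)` over a length `W ≥ 2M/ε`, and put `g = φ F`.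
Then
  `(f - g)(z) - (f - g)(w) = [f(z) - f(w) - φ(z) (F(z) - F(w))] + (φ(w) - φ(z)) F(w)`,
where the bracket vanishes for `z ∈ K` and is at most `3ε` otherwise, while the last term is at
most `2M/W ≤ ε` on a `β`-unit ball. Clamping `f`, rather than cutting off `f` itself, avoids any
growth estimate for `f`. The lower bound `β(z, w) ≳ (|z - w|/ρ(z))^δ` makes `β`-balls
Euclidean-bounded, which gives `g` compact support and makes `ω(f)` a genuine supremum.
-/

open Bornology

section Cutoff

variable {X : Type*}

noncomputable def cutoff (d : X → ℝ) (T W : ℝ) (x : X) : ℝ :=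
  projIcc 0 1 zero_le_one ((T + W - d x) / W)

variable {d : X → ℝ} {T W : ℝ}

theorem cutoff_mem_Icc (x : X) : cutoff d T W x ∈ Icc (0 : ℝ) 1 :=
  (projIcc 0 1 zero_le_one _).2

theorem cutoff_eq_one (hW : 0 < W) {x : X} (hx : d x ≤ T) : cutoff d T W x = 1 := by
  rw [cutoff, projIcc_of_right_le _ ((le_div_iff₀ hW).2 (by linarith))]

theorem cutoff_eq_zero (hW : 0 < W) {x : X} (hx : T + W ≤ d x) : cutoff d T W x = 0 := by
  rw [cutoff, projIcc_of_le_left _ (div_nonpos_of_nonpos_of_nonneg (by linarith) hW.le)]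

theorem abs_cutoff_sub_cutoff_le (hW : 0 < W) (x y : X) :
    |cutoff d T W x - cutoff d T W y| ≤ |d x - d y| / W := by
  refine (abs_projIcc_sub_projIcc _).trans_eq ?_
  rw [← sub_div, abs_div, abs_of_pos hW, abs_sub_comm]
  ring_nf

theorem abs_cutoff_sub_cutoff_le_of_triangle {β : X → X → ℝ} (hsymm : ∀ x y, β x y = β y x)
    (htri : ∀ x y z, β x z ≤ β x y + β y z) (hW : 0 < W) (x₀ x y : X) :
    |cutoff (β x₀) T W x - cutoff (β x₀) T W y| ≤ β x y / W := by
  refine (abs_cutoff_sub_cutoff_le hW x y).trans (div_le_div_of_nonneg_right ?_ hW.le)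
  rw [abs_sub_le_iff]
  constructor <;> linarith [htri x₀ x y, htri x₀ y x, hsymm x y]

theorem hasCompactSupport_cutoff_mul [PseudoMetricSpace X] [ProperSpace X] (hW : 0 < W)
    (hb : IsBounded {x | d x < T + W}) (F : X → ℂ) :
    HasCompactSupport fun x => (cutoff d T W x : ℂ) * F x :=
  HasCompactSupport.intro hb.isCompact_closure fun x hx => by
    rw [cutoff_eq_zero hW (not_lt.1 fun h => hx (subset_closure h)), Complex.ofReal_zero, zero_mul]

end Cutoff

section Truncation

noncomputable def truncate (M : ℝ) (ζ : ℂ) : ℂ :=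
  ⟨max (min M ζ.re) (-M), max (min M ζ.im) (-M)⟩

theorem abs_clamp_sub_clamp_le (M s t : ℝ) :
    |max (min M s) (-M) - max (min M t) (-M)| ≤ |s - t| :=
  (abs_max_sub_max_le_abs _ _ _).trans <| (abs_min_sub_min_le_max _ _ _ _).trans_eq <| by simp

theorem truncate_eq_self {M : ℝ} {ζ : ℂ} (h : ‖ζ‖ ≤ M) : truncate M ζ = ζ := by
  have hre := abs_le.1 ((Complex.abs_re_le_norm ζ).trans h)
  have him := abs_le.1 ((Complex.abs_im_le_norm ζ).trans h)
  apply Complex.ext <;> simp [truncate, hre.1, hre.2, him.1, him.2]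

theorem norm_truncate_le {M : ℝ} (hM : 0 ≤ M) (ζ : ℂ) : ‖truncate M ζ‖ ≤ 2 * M := by
  have hclamp (t : ℝ) : |max (min M t) (-M)| ≤ M :=
    abs_le.2 ⟨le_max_right _ _, max_le (min_le_left _ _) (by linarith)⟩
  refine (Complex.norm_le_abs_re_add_abs_im _).trans ?_
  simp only [truncate]
  linarith [hclamp ζ.re, hclamp ζ.im]

theorem norm_truncate_sub_truncate_le (M : ℝ) (a b : ℂ) :
    ‖truncate M a - truncate M b‖ ≤ 2 * ‖a - b‖ := by
  refine (Complex.norm_le_abs_re_add_abs_im _).trans ?_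
  have hre := (abs_clamp_sub_clamp_le M a.re b.re).trans (Complex.abs_re_le_norm (a - b))
  have him := (abs_clamp_sub_clamp_le M a.im b.im).trans (Complex.abs_im_le_norm (a - b))
  simp only [truncate, Complex.sub_re, Complex.sub_im] at hre him ⊢
  linarith

theorem norm_ofReal_mul_truncate_le {p M : ℝ} (hp : p ∈ Icc 0 1) (hM : 0 ≤ M) (ζ : ℂ) :
    ‖(p : ℂ) * truncate M ζ‖ ≤ 2 * M := by
  rw [norm_mul, Complex.norm_real, Real.norm_of_nonneg hp.1]
  exact (mul_le_of_le_one_left (norm_nonneg _) hp.2).trans (norm_truncate_le hM _)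

end Truncation

theorem norm_sub_ofReal_mul_sub_le {a b A B : ℂ} {p q ε : ℝ} (hp : p ∈ Icc 0 1)
    (hAB : ‖A - B‖ ≤ 2 * ‖a - b‖) (hab : (p = 1 ∧ A = a ∧ B = b) ∨ ‖a - b‖ ≤ ε)
    (hq : |q - p| * ‖B‖ ≤ ε) : ‖(a - p * A) - (b - q * B)‖ ≤ 4 * ε := by
  have hε : 0 ≤ ε := (by positivity : 0 ≤ |q - p| * ‖B‖).trans hq
  have hsplit : (a - p * A) - (b - q * B) = ((a - b) - p * (A - B)) + ((q - p : ℝ) : ℂ) * B := by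
    push_cast; ring
  have hfirst : ‖(a - b) - p * (A - B)‖ ≤ 3 * ε := by
    rcases hab with ⟨rfl, rfl, rfl⟩ | hab
    · simpa using (by positivity : 0 ≤ 3 * ε)
    · calc ‖(a - b) - p * (A - B)‖ ≤ ‖a - b‖ + p * ‖A - B‖ := by
            refine (norm_sub_le _ _).trans_eq ?_
            rw [norm_mul, Complex.norm_real, Real.norm_of_nonneg hp.1]
        _ ≤ ε + 1 * (2 * ε) := by gcongr; exacts [hp.2, hAB.trans (by gcongr)]
        _ = 3 * ε := by ring
  have hsecond : ‖((q - p : ℝ) : ℂ) * B‖ ≤ ε := by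
    rwa [norm_mul, Complex.norm_real, Real.norm_eq_abs]
  calc ‖(a - p * A) - (b - q * B)‖ ≤ 3 * ε + ε :=
        hsplit ▸ (norm_add_le _ _).trans (add_le_add hfirst hsecond)
    _ = 4 * ε := by ring

section Oscillation

variable {β : ℂ → ℂ → ℝ} {f : ℂ → ℂ} {z : ℂ}

theorem norm_sub_le_omegaC (hf : Continuous f) (hb : IsBounded {w | β z w < 1}) {w : ℂ}
    (hw : β z w < 1) : ‖f z - f w‖ ≤ omegaC β f z := by
  have hbdd : BddAbove ((fun w => ‖f z - f w‖) '' {w | β z w < 1}) :=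
    (hb.isCompact_closure.bddAbove_image (by fun_prop)).mono (image_mono subset_closure)
  exact le_csSup hbdd (mem_image_of_mem _ hw)

theorem omegaC_le {c : ℝ} (hc : 0 ≤ c) (h : ∀ w, β z w < 1 → ‖f z - f w‖ ≤ c) :
    omegaC β f z ≤ c :=
  Real.sSup_le (by rintro _ ⟨w, hw, rfl⟩; exact h w hw) hc

theorem eventually_norm_sub_le_of_tendsto_omegaC (hf : Continuous f)
    (hb : ∀ z, IsBounded {w | β z w < 1}) (hVO : Tendsto (omegaC β f) (cocompact ℂ) (nhds 0))
    {ε : ℝ} (hε : 0 < ε) : ∀ᶠ z in cocompact ℂ, ∀ w, β z w < 1 → ‖f z - f w‖ ≤ ε :=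
  (hVO.eventually_lt_const hε).mono fun z hz _ hw =>
    (norm_sub_le_omegaC hf (hb z) hw).trans hz.le

end Oscillation

section Comparison

variable {ρ : ℂ → ℝ} {β : ℂ → ℂ → ℝ} {z : ℂ}

theorem isBounded_setOf_lt_of_rpow_le_s13 {r C δ : ℝ} (hρ : 0 < ρ z) (hδ : 0 < δ) (hC : 0 < C)
    (hfar : ∀ w, w ∉ ball z (r * ρ z) → C⁻¹ * (‖z - w‖ / ρ z) ^ δ ≤ β z w) (t : ℝ) :
    IsBounded {w | β z w < t} := by
  refine (isBounded_closedBall (x := z) (r := max r ((C * t) ^ δ⁻¹) * ρ z)).subset fun w hw => ?_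
  rw [mem_closedBall, dist_eq_norm_sub', ← div_le_iff₀ hρ]
  by_cases hnear : w ∈ ball z (r * ρ z)
  · rw [mem_ball, dist_eq_norm_sub', ← div_lt_iff₀ hρ] at hnear
    exact hnear.le.trans (le_max_left _ _)
  · have hD : 0 ≤ ‖z - w‖ / ρ z := by positivity
    have hDδ : (‖z - w‖ / ρ z) ^ δ ≤ C * t := by
      have := (hfar w hnear).trans hw.le
      rwa [inv_mul_le_iff₀ hC] at this
    calc ‖z - w‖ / ρ z = ((‖z - w‖ / ρ z) ^ δ) ^ δ⁻¹ := (Real.rpow_rpow_inv hD hδ.ne').symm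
      _ ≤ (C * t) ^ δ⁻¹ := by gcongr
      _ ≤ _ := le_max_right _ _

theorem exists_forall_le_of_isBounded {K : Set ℂ} (hρ : 0 < ρ z)
    (hnear : ∀ r, 0 < r → ∃ C, ∀ w ∈ ball z (r * ρ z), β z w ≤ C * (‖z - w‖ / ρ z))
    (hK : IsBounded K) : ∃ T, ∀ w ∈ K, β z w ≤ T := by
  obtain ⟨R, hR, hKR⟩ := hK.subset_ball_lt 0 z
  obtain ⟨C, hC⟩ := hnear (R / ρ z) (by positivity)
  refine ⟨|C| * (R / ρ z), fun w hw => ?_⟩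
  have hwR : w ∈ ball z (R / ρ z * ρ z) := by rw [div_mul_cancel₀ R hρ.ne']; exact hKR hw
  have hdist : ‖z - w‖ / ρ z ≤ R / ρ z := by
    rw [mem_ball, dist_eq_norm_sub', ← div_lt_iff₀ hρ] at hwR
    exact hwR.le
  calc β z w ≤ C * (‖z - w‖ / ρ z) := hC w hwR
    _ ≤ |C| * (‖z - w‖ / ρ z) := by gcongr; exact le_abs_self C
    _ ≤ |C| * (R / ρ z) := by gcongr

end Comparison

theorem stmt13_general
    (ρ : ℂ → ℝ) (hρ : ∀ z, 0 < ρ z)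
    (β : ℂ → ℂ → ℝ)
    (hβsymm : ∀ z w, β z w = β w z)
    (hβtri : ∀ z w u, β z u ≤ β z w + β w u)
    (δ : ℝ) (hδ : 0 < δ ∧ δ < 1)
    (hβ : ∀ r : ℝ, 0 < r → ∃ Cr : ℝ, 0 < Cr ∧
      (∀ z w : ℂ, w ∈ Metric.ball z (r * ρ z) →
        Cr⁻¹ * (‖z - w‖ / ρ z) ≤ β z w ∧
        β z w ≤ Cr * (‖z - w‖ / ρ z)) ∧
      (∀ z w : ℂ, w ∉ Metric.ball z (r * ρ z) →
        Cr⁻¹ * (‖z - w‖ / ρ z) ^ δ ≤ β z w ∧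
        β z w ≤ Cr * (‖z - w‖ / ρ z) ^ (2 - δ))) :
    ∃ C : ℝ, 0 < C ∧ ∀ f : ℂ → ℂ, Continuous f →
      Tendsto (omegaC β f) (cocompact ℂ) (nhds 0) →
      ∀ ε : ℝ, 0 < ε → ∃ g : ℂ → ℂ, HasCompactSupport g ∧
        (∃ M : ℝ, ∀ z, ‖g z‖ ≤ M) ∧
        ∀ z : ℂ, omegaC β (fun w => f w - g w) z ≤ C * ε := by
  obtain ⟨C₁, hC₁, -, hfar⟩ := hβ 1 one_pos
  have hbdd (z : ℂ) (t : ℝ) : IsBounded {w | β z w < t} :=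
    isBounded_setOf_lt_of_rpow_le_s13 (hρ z) hδ.1 hC₁ (fun w hw => (hfar z w hw).1) t
  refine ⟨4, by norm_num, fun f hf hVO ε hε => ?_⟩
  obtain ⟨K, hK, hfK⟩ :=
    mem_cocompact.1 (eventually_norm_sub_le_of_tendsto_omegaC hf (hbdd · 1) hVO hε)
  obtain ⟨T, hT⟩ := exists_forall_le_of_isBounded (hρ 0)
    (fun r hr => (hβ r hr).imp fun _ hC w hw => (hC.2.1 0 w hw).2) hK.isBounded
  obtain ⟨M, hM, hfM⟩ := ((hbdd 0 (T + 1)).isCompact_closure.image hf).isBounded.exists_pos_norm_le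
  set W := 2 * M / ε + 1
  have hW : 0 < W := by positivity
  set φ := cutoff (β 0) T W
  refine ⟨fun z => φ z * truncate M (f z), hasCompactSupport_cutoff_mul hW (hbdd 0 _) _,
    ⟨2 * M, fun z => ?_⟩, fun z => omegaC_le (by positivity) fun w hw => ?_⟩
  · exact norm_ofReal_mul_truncate_le (cutoff_mem_Icc z) hM.le _
  have htrunc (x : ℂ) (hx : β 0 x < T + 1) : truncate M (f x) = f x :=
    truncate_eq_self (hfM _ (mem_image_of_mem f (subset_closure hx)))
  refine norm_sub_ofReal_mul_sub_le (cutoff_mem_Icc z) (norm_truncate_sub_truncate_le _ _ _) ?_ ?_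
  · by_cases hz : z ∈ K
    · have hw0 : β 0 w < T + 1 := (hβtri 0 z w).trans_lt (by linarith [hT z hz])
      exact .inl ⟨cutoff_eq_one hW (hT z hz), htrunc z (by linarith [hT z hz]), htrunc w hw0⟩
    · exact .inr (hfK hz w hw)
  · have hφ : |φ w - φ z| ≤ 1 / W :=
      (abs_cutoff_sub_cutoff_le_of_triangle hβsymm hβtri hW 0 w z).trans (by rw [hβsymm]; gcongr)
    calc |φ w - φ z| * ‖truncate M (f w)‖ ≤ 1 / W * (2 * M) := by
          gcongr
          exact norm_truncate_le hM.le _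
      _ ≤ ε := by
          rw [one_div_mul_eq_div, div_le_iff₀ hW, mul_add, mul_div_cancel₀ _ hε.ne']
          linarith

/-- There is a constant `C > 0` such that: if `f` is continuous and
`f ∈ VO`, then for every `ε > 0` there is a bounded, compactly supported `g : ℂ → ℂ` with
`sup_z ω(f - g)(z) ≤ C ε`. -/
theorem stmt13
    (ρ : ℂ → ℝ) (hρ : ∀ z, 0 < ρ z)
    (C₀ θ : ℝ) (hC₀ : 0 < C₀) (hθ : 0 < θ)
    (hρ₁ : ∀ (z w : ℂ) (r : ℝ), 0 < r → r ≤ 1 → w ∈ Metric.ball z (r * ρ z) →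
      C₀⁻¹ ≤ ρ w / ρ z ∧ ρ w / ρ z ≤ C₀)
    (hρ₂ : ∀ (z w : ℂ) (r : ℝ), 1 < r → w ∈ Metric.ball z (r * ρ z) →
      (C₀ * r ^ θ)⁻¹ ≤ ρ w / ρ z ∧ ρ w / ρ z ≤ C₀ * r ^ θ)
    (β : ℂ → ℂ → ℝ)
    (hβsymm : ∀ z w, β z w = β w z) (hβnonneg : ∀ z w, 0 ≤ β z w)
    (hβeq : ∀ z w, β z w = 0 ↔ z = w)
    (hβtri : ∀ z w u, β z u ≤ β z w + β w u)
    (δ : ℝ) (hδ : 0 < δ ∧ δ < 1)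
    (hβ : ∀ r : ℝ, 0 < r → ∃ Cr : ℝ, 0 < Cr ∧
      (∀ z w : ℂ, w ∈ Metric.ball z (r * ρ z) →
        Cr⁻¹ * (‖z - w‖ / ρ z) ≤ β z w ∧
        β z w ≤ Cr * (‖z - w‖ / ρ z)) ∧
      (∀ z w : ℂ, w ∉ Metric.ball z (r * ρ z) →
        Cr⁻¹ * (‖z - w‖ / ρ z) ^ δ ≤ β z w ∧
        β z w ≤ Cr * (‖z - w‖ / ρ z) ^ (2 - δ))) :
    ∃ C : ℝ, 0 < C ∧ ∀ f : ℂ → ℂ, Continuous f →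
      Tendsto (omegaC β f) (cocompact ℂ) (nhds 0) →
      ∀ ε : ℝ, 0 < ε → ∃ g : ℂ → ℂ, HasCompactSupport g ∧
        (∃ M : ℝ, ∀ z, ‖g z‖ ≤ M) ∧
        ∀ z : ℂ, omegaC β (fun w => f w - g w) z ≤ C * ε :=
  stmt13_general ρ hρ β hβsymm hβtri δ hδ hβ
end
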